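/- arXiv:2306.17003 — 11 statements merged into one kernel-verified Lean document; each statement's English description precedes it below -/
import Mathlib

section
/- Let A be a commutative ring with a multi-center {[M_i, a_i]}_{i∈I} and let A' = A[{M_i/a_i}_{i∈I}] be its dilatation, realized as a sub-A-algebra of S⁻¹A. If χ : A → B is a ring homomorphism such that for every i ∈ I the element χ(a_i) is a non-zero-divisor in B and the ideal of B generated by χ(M_i) ∪ {χ(a_i)} equals the principal ideal generated by χ(a_i), then there exists a unique A-algebra homomorphism χ' : A' → B; it sends the fraction λ(m)·λ(a_i)⁻¹ (for m ∈ M_i) to the unique element b ∈ B with χ(a_i)·b = χ(m). -/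
/-- The multi-centered dilatation `A[{M_i/a_i}]` of a commutative ring `A` with
multi-center `{[M_i, a_i]}_{i ∈ I}`, realized as the sub-`A`-algebra of `S⁻¹A`
(where `S` is the multiplicative submonoid generated by the `a_i`) generated by
the fractions `λ(m)·λ(a_i)⁻¹` for `i ∈ I` and `m ∈ M_i`. -/
noncomputable def dilatation {A : Type*} [CommRing A] {I : Type*} (M : I → Ideal A) (a : I → A) :
    Subalgebra A (Localization (Submonoid.closure (Set.range a))) :=
  Algebra.adjoin A {x | ∃ i, ∃ m ∈ M i,
    x = algebraMap A (Localization (Submonoid.closure (Set.range a))) m *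
        Ring.inverse (algebraMap A (Localization (Submonoid.closure (Set.range a))) (a i))}

/-!
Uniqueness: any `A`-algebra map `ψ` satisfies `χ(aᵢ) * ψ(m / aᵢ) = χ(m)`, which pins down `ψ`
on the generators of the dilatation because `χ(aᵢ)` is a non-zero-divisor. Existence: `χ` sends
the whole monoid generated by the `aᵢ` to non-zero-divisors, so it extends to `S⁻¹A → Frac B`
(total ring of fractions), and the ideal condition `χ(aᵢ) ∣ χ(m)` puts the image of every
generator, hence of the whole dilatation, inside `B ⊆ Frac B`.
-/

theorem dvd_of_span_union_eq_span_singleton {R : Type*} [CommSemiring R] {s : Set R} {x y : R}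
    (h : Ideal.span (s ∪ {x}) = Ideal.span {x}) (hy : y ∈ s) : x ∣ y := by
  rw [← Ideal.mem_span_singleton, ← h]
  exact Ideal.subset_span (Or.inl hy)

section Dilatation

variable {A B : Type*} [CommRing A] [CommRing B] [Algebra A B] {I : Type*}

theorem closure_range_le_comap_nonZeroDivisors {a : I → A}
    (hreg : ∀ i, algebraMap A B (a i) ∈ nonZeroDivisors B) :
    Submonoid.closure (Set.range a) ≤ (nonZeroDivisors B).comap (algebraMap A B) :=
  Submonoid.closure_le.2 <| Set.range_subset_iff.2 hreg

theorem algebraMap_mul_apply_of_coe_mul_eq {S : Submonoid A} {D : Subalgebra A (Localization S)}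
    (ψ : D →ₐ[A] B) {x : D} {s m : A}
    (hx : algebraMap A (Localization S) s * x = algebraMap A (Localization S) m) :
    algebraMap A B s * ψ x = algebraMap A B m := by
  have hxD : algebraMap A D s * x = algebraMap A D m := Subtype.ext hx
  rw [← ψ.commutes, ← map_mul, hxD, ψ.commutes]

variable (M : I → Ideal A) (a : I → A)

theorem isUnit_algebraMap_localization_closure_range (i : I) :
    IsUnit (algebraMap A (Localization (Submonoid.closure (Set.range a))) (a i)) :=
  IsLocalization.map_units _ (⟨a i, Submonoid.subset_closure ⟨i, rfl⟩⟩ :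
    Submonoid.closure (Set.range a))

theorem algebraMap_mul_eq_of_eq_mul_inverse {i : I} {m : A}
    {x : Localization (Submonoid.closure (Set.range a))}
    (hx : x = algebraMap A _ m * Ring.inverse (algebraMap A _ (a i))) :
    algebraMap A _ (a i) * x = algebraMap A _ m := by
  rw [hx, mul_left_comm,
    Ring.mul_inverse_cancel _ (isUnit_algebraMap_localization_closure_range a i), mul_one]

theorem dilatation.algHom_ext (hreg : ∀ i, algebraMap A B (a i) ∈ nonZeroDivisors B)
    (ψ₁ ψ₂ : dilatation M a →ₐ[A] B) : ψ₁ = ψ₂ := by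
  refine AlgHom.adjoin_ext fun x ⟨i, m, _, hx⟩ => ?_
  have hx' := algebraMap_mul_eq_of_eq_mul_inverse a hx
  exact (mul_cancel_left_mem_nonZeroDivisors (hreg i)).1 <|
    (algebraMap_mul_apply_of_coe_mul_eq ψ₁ hx').trans
      (algebraMap_mul_apply_of_coe_mul_eq ψ₂ hx').symm

theorem dilatation_le_comap_range {C : Type*} [CommRing C] [Algebra A C] [Algebra B C]
    [IsScalarTower A B C] (F : Localization (Submonoid.closure (Set.range a)) →ₐ[A] C)
    (hdvd : ∀ i, ∀ m ∈ M i, algebraMap A B (a i) ∣ algebraMap A B m) :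
    dilatation M a ≤ (IsScalarTower.toAlgHom A B C).range.comap F := by
  refine Algebra.adjoin_le fun x ⟨i, m, hm, hx⟩ => ?_
  obtain ⟨b, hb⟩ := hdvd i m hm
  have hunit : IsUnit (algebraMap A C (a i)) := by
    simpa using (isUnit_algebraMap_localization_closure_range a i).map F
  have hFx : algebraMap A C (a i) * F x = algebraMap A C m := by
    simpa using congrArg F (algebraMap_mul_eq_of_eq_mul_inverse a hx)
  refine ⟨b, hunit.mul_left_cancel ?_⟩
  change algebraMap A C (a i) * algebraMap B C b = algebraMap A C (a i) * F x
  rw [hFx, IsScalarTower.algebraMap_apply A B C, IsScalarTower.algebraMap_apply A B C m, hb,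
    map_mul]

noncomputable def dilatation.lift (hreg : ∀ i, algebraMap A B (a i) ∈ nonZeroDivisors B)
    (hdvd : ∀ i, ∀ m ∈ M i, algebraMap A B (a i) ∣ algebraMap A B m) :
    dilatation M a →ₐ[A] B :=
  let F : Localization (Submonoid.closure (Set.range a)) →ₐ[A] FractionRing B :=
    IsLocalization.liftAlgHom (f := Algebra.ofId A (FractionRing B)) fun s => by
      simpa [IsScalarTower.algebraMap_apply A B (FractionRing B)] using
        IsLocalization.map_units (FractionRing B)
          (⟨_, closure_range_le_comap_nonZeroDivisors hreg s.2⟩ : nonZeroDivisors B)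
  let ι := IsScalarTower.toAlgHom A B (FractionRing B)
  let e := AlgEquiv.ofInjective ι (IsFractionRing.injective B (FractionRing B))
  (e.symm : ι.range →ₐ[A] B).comp <|
    (F.comp (dilatation M a).val).codRestrict ι.range fun x =>
      dilatation_le_comap_range M a F hdvd x.2

end Dilatation

/-- Universal property of the multi-centered dilatation: if `χ = algebraMap A B` sends each
`a_i` to a non-zero-divisor of `B` generating the ideal generated by `χ(M_i) ∪ {χ(a_i)}`,
then there is a unique `A`-algebra map `χ' : A[{M_i/a_i}] → B`, and it sends the fraction
`λ(m)·λ(a_i)⁻¹` (for `m ∈ M_i`) to the unique `b ∈ B` with `χ(a_i)·b = χ(m)`. -/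
theorem dilatation_universal_property {A B : Type*} [CommRing A] [CommRing B] [Algebra A B]
    {I : Type*} (M : I → Ideal A) (a : I → A)
    (hreg : ∀ i, algebraMap A B (a i) ∈ nonZeroDivisors B)
    (hgen : ∀ i, Ideal.span ((algebraMap A B) '' (M i) ∪ {algebraMap A B (a i)}) =
      Ideal.span {algebraMap A B (a i)}) :
    ∃ χ' : dilatation M a →ₐ[A] B,
      (∀ ψ : dilatation M a →ₐ[A] B, ψ = χ') ∧
      ∀ i, ∀ m ∈ M i, ∀ x : dilatation M a,
        (x : Localization (Submonoid.closure (Set.range a))) =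
          algebraMap A (Localization (Submonoid.closure (Set.range a))) m *
            Ring.inverse (algebraMap A (Localization (Submonoid.closure (Set.range a))) (a i)) →
        algebraMap A B (a i) * χ' x = algebraMap A B m := by
  have hdvd : ∀ i, ∀ m ∈ M i, algebraMap A B (a i) ∣ algebraMap A B m := fun i m hm =>
    dvd_of_span_union_eq_span_singleton (hgen i) ⟨m, hm, rfl⟩
  refine ⟨dilatation.lift M a hreg hdvd, fun ψ => dilatation.algHom_ext M a hreg _ _,
    fun i m _ x hx => ?_⟩
  exact algebraMap_mul_apply_of_coe_mul_eq _ (algebraMap_mul_eq_of_eq_mul_inverse a hx)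
end

section
/- Let A be a commutative ring with a multi-center {[M_i, a_i]}_{i∈I} and let A' = A[{M_i/a_i}_{i∈I}] be its dilatation, realized as a sub-A-algebra of S⁻¹A. For every finitely supported ν ∈ ⊕_{i∈I} ℕ, the ideal of A' generated by the image under λ of the product ideal L^ν = ∏_i (M_i + (a_i))^{ν_i} equals the principal ideal of A' generated by the image of a^ν = ∏_i a_i^{ν_i}. In particular, for every i ∈ I the ideal of A' generated by the image of M_i + (a_i) is the principal ideal generated by the image of a_i. -/
namespace Ideal

variable {R S ι : Type*} [CommSemiring R] [CommSemiring S]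

theorem map_finsuppProd_pow {F : Type*} [FunLike F R S] [RingHomClass F R S] (f : F)
    (J : ι → Ideal R) (ν : ι →₀ ℕ) :
    map f (ν.prod fun i n => J i ^ n) = ν.prod fun i n => map f (J i) ^ n := by
  simpa only [mapHom_apply, map_pow] using map_finsuppProd (mapHom f) ν fun i n => J i ^ n

theorem finsuppProd_span_singleton_pow (x : ι → R) (ν : ι →₀ ℕ) :
    (ν.prod fun i n => span {x i} ^ n) = span {ν.prod fun i n => x i ^ n} := by
  simp only [Finsupp.prod, span_singleton_pow, prod_span_singleton]

end Ideal

namespace dilatation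

variable {A I : Type*} [CommRing A] (M : I → Ideal A) (a : I → A)

theorem algebraMap_dvd_algebraMap {i : I} {m : A} (hm : m ∈ M i) :
    algebraMap A (dilatation M a) (a i) ∣ algebraMap A (dilatation M a) m := by
  set L := Localization (Submonoid.closure (Set.range a))
  have hunit : IsUnit (algebraMap A L (a i)) :=
    IsLocalization.map_units L (⟨a i, Submonoid.subset_closure ⟨i, rfl⟩⟩ :
      Submonoid.closure (Set.range a))
  have hfrac : algebraMap A L m * Ring.inverse (algebraMap A L (a i)) ∈ dilatation M a :=
    Algebra.subset_adjoin ⟨i, m, hm, rfl⟩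
  refine Dvd.intro ⟨_, hfrac⟩ (Subtype.ext ?_)
  change algebraMap A L (a i) * (algebraMap A L m * Ring.inverse _) = algebraMap A L m
  rw [mul_left_comm, Ring.mul_inverse_cancel _ hunit, mul_one]

theorem map_center_eq_span (i : I) :
    Ideal.map (algebraMap A (dilatation M a)) (M i + Ideal.span {a i}) =
      Ideal.span {algebraMap A (dilatation M a) (a i)} := by
  have hM : Ideal.map (algebraMap A (dilatation M a)) (M i) ≤
      Ideal.span {algebraMap A (dilatation M a) (a i)} :=
    Ideal.map_le_iff_le_comap.mpr fun m hm =>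
      Ideal.mem_span_singleton.mpr (algebraMap_dvd_algebraMap M a hm)
  rw [Submodule.add_eq_sup, Ideal.map_sup, Ideal.map_span, Set.image_singleton,
    sup_eq_right.mpr hM]

end dilatation

/-- In the dilatation `A' = A[{M_i/a_i}]`, for every finitely supported `ν`, the ideal of
`A'` generated by the image of `L^ν = ∏ (M_i + (a_i))^{ν_i}` is the principal ideal generated
by the image of `a^ν = ∏ a_i^{ν_i}`; in particular the ideal generated by the image of
`M_i + (a_i)` is principal, generated by the image of `a_i`. -/
theorem dilatation_ideal_map_eq_span {A : Type*} [CommRing A] {I : Type*}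
    (M : I → Ideal A) (a : I → A) (ν : I →₀ ℕ) :
    Ideal.map (algebraMap A (dilatation M a)) (ν.prod fun i n => (M i + Ideal.span {a i}) ^ n) =
      Ideal.span {algebraMap A (dilatation M a) (ν.prod fun i n => a i ^ n)} ∧
    ∀ i, Ideal.map (algebraMap A (dilatation M a)) (M i + Ideal.span {a i}) =
      Ideal.span {algebraMap A (dilatation M a) (a i)} := by
  refine ⟨?_, dilatation.map_center_eq_span M a⟩
  rw [Ideal.map_finsuppProd_pow, map_finsuppProd]
  simp only [dilatation.map_center_eq_span, map_pow, Ideal.finsuppProd_span_singleton_pow]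
end

section
/- Let A and B be commutative rings, f : A → B a ring homomorphism, {[M_i, a_i]}_{i∈I} a multi-center in A and {[N_i, b_i]}_{i∈I} a multi-center in B such that f(M_i) ⊆ N_i and f(a_i) = b_i for every i ∈ I. Let S ⊆ A (resp. T ⊆ B) be the submonoid generated by the a_i (resp. the b_i). Then the ring homomorphism S⁻¹A → T⁻¹B induced by f maps the dilatation A[{M_i/a_i}_{i∈I}] ⊆ S⁻¹A into the dilatation B[{N_i/b_i}_{i∈I}] ⊆ T⁻¹B; in particular there is a canonical A-algebra homomorphism A[{M_i/a_i}_{i∈I}] → B[{N_i/b_i}_{i∈I}]. -/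
lemma closure_range_le_comap {A B : Type*} [CommRing A] [CommRing B] (f : A →+* B)
    {I : Type*} (a : I → A) (b : I → B) (hb : ∀ i, f (a i) = b i) :
    Submonoid.closure (Set.range a) ≤ (Submonoid.closure (Set.range b)).comap f := by
  rw [Submonoid.closure_le]
  rintro x ⟨i, rfl⟩
  exact Submonoid.mem_comap.mpr ((hb i) ▸ Submonoid.subset_closure ⟨i, rfl⟩)

lemma ring_inverse_map' {R S : Type*} [CommRing R] [CommRing S] (g : R →+* S) (x : R)
    (hx : IsUnit x) : g (Ring.inverse x) = Ring.inverse (g x) := by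
  have h1 : g (Ring.inverse x) * g x = 1 := by
    rw [← map_mul, Ring.inverse_mul_cancel _ hx, map_one]
  have h2 : Ring.inverse (g x) * g x = 1 := Ring.inverse_mul_cancel _ (hx.map g)
  exact (hx.map g).mul_left_cancel (by rw [mul_comm (g x), mul_comm (g x), h1, h2])

/-- Functoriality of dilatations: a ring map `f : A → B` with `f(M_i) ⊆ N_i` and
`f(a_i) = b_i` induces a map `S⁻¹A → T⁻¹B` carrying the dilatation `A[{M_i/a_i}]`
into the dilatation `B[{N_i/b_i}]`. -/
theorem dilatation_functoriality {A B : Type*} [CommRing A] [CommRing B] {I : Type*}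
    (M : I → Ideal A) (a : I → A) (N : I → Ideal B) (b : I → B) (f : A →+* B)
    (hM : ∀ i, ∀ m ∈ M i, f m ∈ N i) (hb : ∀ i, f (a i) = b i) :
    ∀ x ∈ dilatation M a,
      IsLocalization.map (Localization (Submonoid.closure (Set.range b))) f
        (closure_range_le_comap f a b hb) x ∈ dilatation N b := by
  intro x hx
  set g : Localization (Submonoid.closure (Set.range a)) →+*
      Localization (Submonoid.closure (Set.range b)) :=
    IsLocalization.map (Localization (Submonoid.closure (Set.range b))) f
      (closure_range_le_comap f a b hb) with hg
  induction hx using Algebra.adjoin_induction with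
  | mem y hy =>
    obtain ⟨i, m, hm, rfl⟩ := hy
    rw [map_mul]
    have hcomm : ∀ r : A, g (algebraMap A _ r) = algebraMap B _ (f r) := fun r =>
      IsLocalization.map_eq _ r
    have hunit : IsUnit (algebraMap A (Localization (Submonoid.closure (Set.range a))) (a i)) :=
      IsLocalization.map_units (Localization (Submonoid.closure (Set.range a)))
        (⟨a i, Submonoid.subset_closure ⟨i, rfl⟩⟩ : Submonoid.closure (Set.range a))
    rw [hcomm, ring_inverse_map' g _ hunit, hcomm, hb i]
    exact Algebra.subset_adjoin ⟨i, f m, hM i m hm, rfl⟩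
  | algebraMap r =>
    rw [IsLocalization.map_eq]
    exact Subalgebra.algebraMap_mem _ _
  | add u v _ _ hu hv => rw [map_add]; exact add_mem hu hv
  | mul u v _ _ hu hv => rw [map_mul]; exact mul_mem hu hv
end

section
/- Let A be a commutative ring with a multi-center {[M_i, a_i]}_{i∈I}, let K ⊆ I and J = I \ K. Let S_K (resp. S_I) be the submonoid of A generated by {a_i : i ∈ K} (resp. {a_i : i ∈ I}). The canonical localization map S_K⁻¹A → S_I⁻¹A carries the dilatation A[{M_i/a_i}_{i∈K}] into the dilatation A[{M_i/a_i}_{i∈I}], giving a canonical A-algebra homomorphism φ : A[{M_i/a_i}_{i∈K}] → A[{M_i/a_i}_{i∈I}]. If moreover M_j ⊆ (a_j) for every j ∈ J, then φ is surjective. -/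
/-- The dilatation `A[{M_i/a_i}_{i ∈ K}]` of a commutative ring `A` with multi-center
`{[M_i, a_i]}` restricted to a subset `K` of the index set, realized as the
sub-`A`-algebra of `S_K⁻¹A` (where `S_K` is the submonoid generated by `{a_i : i ∈ K}`)
generated by the fractions `λ_K(m)·λ_K(a_i)⁻¹` for `i ∈ K` and `m ∈ M_i`. -/
noncomputable def dilatationOn {A : Type*} [CommRing A] {I : Type*}
    (M : I → Ideal A) (a : I → A) (K : Set I) :
    Subalgebra A (Localization (Submonoid.closure (a '' K))) :=
  Algebra.adjoin A {x | ∃ i ∈ K, ∃ m ∈ M i,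
    x = algebraMap A (Localization (Submonoid.closure (a '' K))) m *
        Ring.inverse (algebraMap A (Localization (Submonoid.closure (a '' K))) (a i))}

lemma closure_image_le_comap {A : Type*} [CommRing A] {I : Type*} (a : I → A)
    {K L : Set I} (h : K ⊆ L) :
    Submonoid.closure (a '' K) ≤ (Submonoid.closure (a '' L)).comap (RingHom.id A) := by
  rw [Submonoid.closure_le]
  rintro x ⟨i, hi, rfl⟩
  exact Submonoid.mem_comap.mpr (Submonoid.subset_closure ⟨i, h hi, rfl⟩)

lemma map_ring_inverse' {R S : Type*} [CommRing R] [CommRing S] (f : R →+* S) {x : R}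
    (h : IsUnit x) : f (Ring.inverse x) = Ring.inverse (f x) := by
  obtain ⟨u, rfl⟩ := h
  have h2 : f ↑u = ↑((Units.map (f : R →* S)) u) := rfl
  rw [Ring.inverse_unit, h2, Ring.inverse_unit]
  exact (Units.coe_map_inv (f : R →* S) u).symm

/-- The canonical map `S_K⁻¹A → S_I⁻¹A` carries `A[{M_i/a_i}_{i ∈ K}]` into
`A[{M_i/a_i}_{i ∈ I}]`, and the resulting `A`-algebra map between the dilatations is
surjective as soon as `M_j ⊆ (a_j)` for every `j ∉ K`. -/
theorem dilatationOn_map_surjective {A : Type*} [CommRing A] {I : Type*}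
    (M : I → Ideal A) (a : I → A) (K : Set I) :
    (∀ x ∈ dilatationOn M a K,
      IsLocalization.map (Localization (Submonoid.closure (a '' (Set.univ : Set I))))
        (RingHom.id A) (closure_image_le_comap a (Set.subset_univ K)) x ∈
          dilatationOn M a Set.univ) ∧
    ((∀ j ∉ K, M j ≤ Ideal.span {a j}) →
      ∀ y ∈ dilatationOn M a Set.univ, ∃ x ∈ dilatationOn M a K,
        IsLocalization.map (Localization (Submonoid.closure (a '' (Set.univ : Set I))))
          (RingHom.id A) (closure_image_le_comap a (Set.subset_univ K)) x = y) := by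
  set SK := Submonoid.closure (a '' K)
  set SI := Submonoid.closure (a '' (Set.univ : Set I))
  set f : Localization SK →+* Localization SI :=
    IsLocalization.map (Localization SI) (RingHom.id A)
      (closure_image_le_comap a (Set.subset_univ K)) with hf
  have hcomm : ∀ x : A, f (algebraMap A (Localization SK) x) =
      algebraMap A (Localization SI) x := fun x => by
    rw [hf, IsLocalization.map_eq]; rfl
  have hunitK : ∀ i ∈ K, IsUnit (algebraMap A (Localization SK) (a i)) := fun i hi =>
    IsLocalization.map_units (Localization SK) (⟨a i, Submonoid.subset_closure ⟨i, hi, rfl⟩⟩ : SK)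
  have hunitI : ∀ i : I, IsUnit (algebraMap A (Localization SI) (a i)) := fun i =>
    IsLocalization.map_units (Localization SI)
      (⟨a i, Submonoid.subset_closure ⟨i, trivial, rfl⟩⟩ : SI)
  have hgen : ∀ i ∈ K, ∀ m,
      f (algebraMap A (Localization SK) m *
          Ring.inverse (algebraMap A (Localization SK) (a i))) =
        algebraMap A (Localization SI) m *
          Ring.inverse (algebraMap A (Localization SI) (a i)) := by
    intro i hi m
    rw [map_mul, hcomm, map_ring_inverse' f (hunitK i hi), hcomm]
  constructor
  · intro x hx
    have : dilatationOn M a K ≤ (dilatationOn M a Set.univ).comap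
        (AlgHom.mk' f (fun c x => by
          simp [Algebra.smul_def, map_mul, hcomm])) := by
      apply Algebra.adjoin_le
      rintro x ⟨i, hi, m, hm, rfl⟩
      show f _ ∈ dilatationOn M a Set.univ
      rw [hgen i hi m]
      exact Algebra.subset_adjoin ⟨i, trivial, m, hm, rfl⟩
    exact this hx
  · intro h y hy
    have : dilatationOn M a Set.univ ≤ (dilatationOn M a K).map
        (AlgHom.mk' f (fun c x => by
          simp [Algebra.smul_def, map_mul, hcomm])) := by
      apply Algebra.adjoin_le
      rintro y ⟨i, -, m, hm, rfl⟩
      by_cases hi : i ∈ K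
      · exact ⟨_, Algebra.subset_adjoin ⟨i, hi, m, hm, rfl⟩, hgen i hi m⟩
      · obtain ⟨c, hc⟩ := Ideal.mem_span_singleton.mp (h i hi hm)
        refine ⟨algebraMap A (Localization SK) c,
          Subalgebra.algebraMap_mem _ c, ?_⟩
        show f _ = _
        rw [hcomm, hc, map_mul, mul_comm (algebraMap A (Localization SI) (a i)),
          mul_assoc, Ring.mul_inverse_cancel _ (hunitI i), mul_one]
    obtain ⟨x, hx, hfx⟩ := this hy
    exact ⟨x, hx, hfx⟩
end

section
/- Let A be a commutative ring with a multi-center {[M_i, a_i]}_{i∈I}, let K ⊆ I and J = I \ K, and let φ : A[{M_i/a_i}_{i∈K}] → A[{M_i/a_i}_{i∈I}] be the canonical A-algebra homomorphism induced by the localization map S_K⁻¹A → S_I⁻¹A. If a_j is a non-zero-divisor in A for every j ∈ J, then φ is injective. -/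
/-! The localization map `S_K⁻¹A → S_I⁻¹A` is already injective: every element of `S_I` is an
element of `S_K` times a non-zero-divisor, so inverting it kills nothing that `S_K` does not. -/

theorem IsLocalization.map_id_injective_of_le_sup_nonZeroDivisors {A : Type*} [CommRing A]
    {S T : Submonoid A} (Sₘ Tₘ : Type*) [CommRing Sₘ] [Algebra A Sₘ] [IsLocalization S Sₘ]
    [CommRing Tₘ] [Algebra A Tₘ] [IsLocalization T Tₘ]
    (hST : S ≤ T.comap (RingHom.id A)) (hT : T ≤ S ⊔ nonZeroDivisors A) :
    Function.Injective (IsLocalization.map Tₘ (RingHom.id A) hST : Sₘ →+* Tₘ) := by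
  rw [injective_iff_map_eq_zero]
  intro x hx
  obtain ⟨⟨m, s⟩, rfl⟩ := IsLocalization.mk'_surjective S x
  rw [IsLocalization.map_mk', IsLocalization.mk'_eq_zero_iff] at hx
  obtain ⟨⟨t, ht⟩, htm⟩ := hx
  obtain ⟨s', hs', r, hr, rfl⟩ := Submonoid.mem_sup.mp (hT ht)
  have hs'm : s' * m = 0 :=
    (mem_nonZeroDivisors_iff.mp hr).2 _ (by rw [← htm, RingHom.id_apply]; ring)
  exact (IsLocalization.mk'_eq_zero_iff m s).mpr ⟨⟨s', hs'⟩, hs'm⟩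

theorem closure_image_le_sup_nonZeroDivisors {A : Type*} [CommRing A] {I : Type*}
    (a : I → A) {K L : Set I} (hreg : ∀ j ∈ L, j ∉ K → a j ∈ nonZeroDivisors A) :
    Submonoid.closure (a '' L) ≤ Submonoid.closure (a '' K) ⊔ nonZeroDivisors A := by
  rw [Submonoid.closure_le]
  rintro _ ⟨i, hiL, rfl⟩
  by_cases hiK : i ∈ K
  · exact Submonoid.mem_sup_left (Submonoid.subset_closure ⟨i, hiK, rfl⟩)
  · exact Submonoid.mem_sup_right (hreg i hiL hiK)

/-- If `a_j` is a non-zero-divisor in `A` for every `j ∉ K`, then the canonical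
`A`-algebra map `A[{M_i/a_i}_{i ∈ K}] → A[{M_i/a_i}_{i ∈ I}]` (induced by the
localization map `S_K⁻¹A → S_I⁻¹A`) is injective. -/
theorem dilatationOn_map_injective {A : Type*} [CommRing A] {I : Type*}
    (M : I → Ideal A) (a : I → A) (K : Set I)
    (hreg : ∀ j ∉ K, a j ∈ nonZeroDivisors A) :
    Set.InjOn
      (IsLocalization.map (Localization (Submonoid.closure (a '' (Set.univ : Set I))))
        (RingHom.id A) (closure_image_le_comap a (Set.subset_univ K)))
      ((dilatationOn M a K : Set (Localization (Submonoid.closure (a '' K))))) :=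
  (IsLocalization.map_id_injective_of_le_sup_nonZeroDivisors _ _ _
    (closure_image_le_sup_nonZeroDivisors a fun j _ hj ↦ hreg j hj)).injOn
end

section
/- Let A be a commutative ring with a finite multi-center {[M_i, a_i]}_{i=1,…,k}, let S be the submonoid of A generated by a_1, …, a_k, and λ : A → S⁻¹A the localization map. Then, as sub-A-algebras of S⁻¹A, the dilatation A[{M_i/a_i}_{i=1,…,k}] (generated by the fractions λ(m)·λ(a_i)⁻¹ for m ∈ M_i) equals the mono-centered dilatation A[N/(a_1⋯a_k)], i.e. the sub-A-algebra generated by the fractions λ(n)·λ(a_1⋯a_k)⁻¹ for n in the ideal N = Σ_{i=1}^{k} M_i · ∏_{j≠i} (a_j). -/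
/-! In `S⁻¹A` every `a_j` is invertible and `m / a_i = (m ∏_{j≠i} a_j) / (a_1⋯a_k)`, so each
generator of `A[{M_i/a_i}]` is a generator of `A[N/(a_1⋯a_k)]`. Conversely, the numerators `n`
with `n / (a_1⋯a_k) ∈ A[{M_i/a_i}]` form an ideal, and it contains every `M_i · (∏_{j≠i} a_j)`,
hence `N`. -/

theorem Ring.mul_prod_erase_mul_inverse_prod {M₀ ι : Type*} [CommMonoidWithZero M₀]
    [DecidableEq ι] {s : Finset ι} {b : ι → M₀} {i : ι} (hi : i ∈ s)
    (hb : IsUnit (∏ j ∈ s.erase i, b j)) (x : M₀) :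
    x * (∏ j ∈ s.erase i, b j) * Ring.inverse (∏ j ∈ s, b j) = x * Ring.inverse (b i) := by
  rw [← Finset.mul_prod_erase s b hi, Ring.mul_inverse_rev, mul_assoc, ← mul_assoc _ (inverse _),
    Ring.mul_inverse_cancel _ hb, one_mul]

namespace Subalgebra

variable {A L : Type*} [CommSemiring A] [Semiring L] [Algebra A L]

def numerators (B : Subalgebra A L) (c : L) : Ideal A :=
  (toSubmodule B).comap (LinearMap.toSpanSingleton A L c)

theorem mem_numerators {B : Subalgebra A L} {c : L} {n : A} :
    n ∈ B.numerators c ↔ algebraMap A L n * c ∈ B := by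
  simp [numerators, Algebra.smul_def]

theorem adjoin_le_iff_le_numerators {I : Ideal A} {c : L} {B : Subalgebra A L} :
    Algebra.adjoin A {x | ∃ n ∈ I, x = algebraMap A L n * c} ≤ B ↔ I ≤ B.numerators c := by
  rw [Algebra.adjoin_le_iff]
  constructor
  · exact fun h n hn => mem_numerators.2 (h ⟨n, hn, rfl⟩)
  · rintro h _ ⟨n, hn, rfl⟩
    exact mem_numerators.1 (h hn)

end Subalgebra

/-- For a finite multi-center `{[M_i,a_i]}_{i=1,…,k}`, the multi-centered dilatation
`A[{M_i/a_i}]` equals the mono-centered dilatation `A[N/(a_1⋯a_k)]` where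
`N = Σ_i M_i · ∏_{j ≠ i} (a_j)`, both regarded as sub-`A`-algebras of `S⁻¹A`. -/
theorem dilatation_finite_eq_monocentered {A : Type*} [CommRing A] {k : ℕ}
    (M : Fin k → Ideal A) (a : Fin k → A) :
    dilatation M a =
      Algebra.adjoin A {x : Localization (Submonoid.closure (Set.range a)) |
        ∃ n ∈ (∑ i, M i * ∏ j ∈ Finset.univ.erase i, Ideal.span {a j}),
          x = algebraMap A (Localization (Submonoid.closure (Set.range a))) n *
              Ring.inverse (algebraMap A (Localization (Submonoid.closure (Set.range a)))
                (∏ j, a j))} := by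
  set L := Localization (Submonoid.closure (Set.range a))
  have hunit (s : Finset (Fin k)) : IsUnit (∏ j ∈ s, algebraMap A L (a j)) :=
    IsUnit.prod_iff.2 fun j _ => IsLocalization.map_units L
      (⟨a j, Submonoid.subset_closure (Set.mem_range_self j)⟩ : Submonoid.closure _)
  have hfrac (i : Fin k) (m : A) :
      algebraMap A L (m * ∏ j ∈ Finset.univ.erase i, a j) *
          Ring.inverse (algebraMap A L (∏ j, a j)) =
        algebraMap A L m * Ring.inverse (algebraMap A L (a i)) := by
    simpa only [map_mul, map_prod] using
      Ring.mul_prod_erase_mul_inverse_prod (Finset.mem_univ i) (hunit _) (algebraMap A L m)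
  simp_rw [Ideal.prod_span_singleton]
  apply le_antisymm
  · refine Algebra.adjoin_le ?_
    rintro _ ⟨i, m, hm, rfl⟩
    refine Algebra.subset_adjoin ⟨_, ?_, (hfrac i m).symm⟩
    exact Finset.single_le_sum (f := fun i => M i * Ideal.span {∏ j ∈ Finset.univ.erase i, a j})
      (fun _ _ => zero_le) (Finset.mem_univ i)
      (Ideal.mul_mem_mul hm (Ideal.mem_span_singleton_self _))
  · rw [Subalgebra.adjoin_le_iff_le_numerators, Ideal.sum_eq_sup, Finset.sup_le_iff]
    rintro i - _ hn
    obtain ⟨m, hm, rfl⟩ := Ideal.mem_mul_span_singleton.1 hn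
    rw [Subalgebra.mem_numerators, hfrac]
    exact Algebra.subset_adjoin ⟨i, m, hm, rfl⟩
end

section
/- Let A be a commutative ring with a multi-center {[M_i, a_i]}_{i∈I}, and let f : A → B be a ring homomorphism making B a flat A-algebra (Module.Flat A B). Set b_i = f(a_i) and let N_i ⊆ B be the ideal generated by f(M_i). Let A' = A[{M_i/a_i}_{i∈I}] ⊆ S⁻¹A and B' = B[{N_i/b_i}_{i∈I}] ⊆ T⁻¹B be the dilatations (S, T the submonoids generated by the a_i, resp. b_i). Then the canonical B-algebra homomorphism B ⊗_A A' → T⁻¹B, sending b ⊗ x to the product of the image of b with the image of x under the map S⁻¹A → T⁻¹B induced by f, is injective with image exactly B'; i.e. B ⊗_A A' ≅ B[{N_i/b_i}_{i∈I}] as B-algebras. -/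
open scoped TensorProduct

set_option synthInstance.maxHeartbeats 1000000
set_option maxHeartbeats 1000000

lemma ringHom_ring_inverse {R S : Type*} [CommRing R] [CommRing S] (h : R →+* S) (u : R)
    (hu : IsUnit u) : h (Ring.inverse u) = Ring.inverse (h u) := by
  obtain ⟨v, rfl⟩ := hu
  have hv : IsUnit (h ↑v) := ⟨Units.map h.toMonoidHom v, rfl⟩
  rw [Ring.inverse_unit, Ring.inverse_of_isUnit hv]
  symm
  apply Units.inv_eq_of_mul_eq_one_right
  rw [IsUnit.unit_spec, ← map_mul, Units.mul_inv, map_one]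

/-- Flat base change for dilatations: if `B` is a flat `A`-algebra, `b_i = f(a_i)` and
`N_i = f(M_i)·B`, then the canonical `B`-algebra map `B ⊗_A A[{M_i/a_i}] → T⁻¹B`,
`y ⊗ x ↦ (image of y)·(image of x)`, is injective with image the dilatation
`B[{N_i/b_i}]`; i.e. `B ⊗_A A[{M_i/a_i}] ≅ B[{N_i/b_i}]`. -/
theorem dilatation_flat_base_change {A B : Type*} [CommRing A] [CommRing B] [Algebra A B]
    [Module.Flat A B] {I : Type*} (M : I → Ideal A) (a : I → A) :
    ∃ Φ : B ⊗[A] (dilatation M a) →ₐ[B]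
        Localization (Submonoid.closure (Set.range fun i => algebraMap A B (a i))),
      (∀ (y : B) (x : dilatation M a),
        Φ (y ⊗ₜ x) =
          algebraMap B (Localization (Submonoid.closure
              (Set.range fun i => algebraMap A B (a i)))) y *
            IsLocalization.map
              (Localization (Submonoid.closure (Set.range fun i => algebraMap A B (a i))))
              (algebraMap A B)
              (closure_range_le_comap (algebraMap A B) a _ fun _ => rfl)
              (x : Localization (Submonoid.closure (Set.range a)))) ∧
      Function.Injective Φ ∧
      Set.range Φ =
        (dilatation (fun i => Ideal.map (algebraMap A B) (M i))
          (fun i => algebraMap A B (a i)) :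
            Set (Localization (Submonoid.closure
              (Set.range fun i => algebraMap A B (a i))))) := by
  classical
  set S : Submonoid A := Submonoid.closure (Set.range a) with hS
  set T : Submonoid B := Submonoid.closure (Set.range fun i => algebraMap A B (a i)) with hT
  set g : Localization S →+* Localization T :=
    IsLocalization.map (Localization T) (algebraMap A B)
      (closure_range_le_comap (algebraMap A B) a _ fun _ => rfl) with hg
  letI : Algebra (Localization S) (Localization T) := g.toAlgebra
  have halgST : algebraMap (Localization S) (Localization T) = g := rfl
  haveI : IsScalarTower A (Localization S) (Localization T) :=
    IsScalarTower.of_algebraMap_eq' (by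
      rw [halgST, hg, IsLocalization.map_comp, ← IsScalarTower.algebraMap_eq])
  have hmapT : Algebra.algebraMapSubmonoid B S = T := by
    rw [hS, hT, Algebra.algebraMapSubmonoid, MonoidHom.map_mclosure, ← Set.range_comp]
    rfl
  haveI : IsLocalization (Algebra.algebraMapSubmonoid B S) (Localization T) := by
    rw [hmapT]; exact Localization.isLocalization
  haveI hpush : Algebra.IsPushout A B (Localization S) (Localization T) :=
    Algebra.isPushout_of_isLocalization S (Localization S) B (Localization T)
  -- basic computations for g
  have hgmap : ∀ m : A, g (algebraMap A (Localization S) m) =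
      algebraMap B (Localization T) (algebraMap A B m) := by
    intro m; rw [hg, IsLocalization.map_eq]
  have hginv : ∀ i, g (Ring.inverse (algebraMap A (Localization S) (a i))) =
      Ring.inverse (algebraMap B (Localization T) (algebraMap A B (a i))) := by
    intro i
    rw [ringHom_ring_inverse g _ (IsLocalization.map_units (M := S) (Localization S)
      ⟨a i, Submonoid.subset_closure ⟨i, rfl⟩⟩), hgmap]
  -- the algebra hom version of g
  set g' : Localization S →ₐ[A] Localization T :=
    IsScalarTower.toAlgHom A (Localization S) (Localization T) with hg'
  -- the big map Ψ
  set Ψ : B ⊗[A] (Localization S) →ₐ[B] Localization T :=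
    Algebra.TensorProduct.lift (Algebra.ofId B (Localization T)) g'
      (fun _ _ => Commute.all _ _) with hΨ
  have hΨtmul : ∀ (y : B) (x : Localization S),
      Ψ (y ⊗ₜ x) = algebraMap B (Localization T) y * g x := fun y x => by
    rw [hΨ, Algebra.TensorProduct.lift_tmul]; rfl
  -- Ψ is injective via the pushout equivalence
  have hΨeq : ∀ z, Ψ z = hpush.out.equiv z := by
    intro z
    induction z using TensorProduct.induction_on with
    | zero => simp
    | tmul y x =>
      rw [hΨtmul, hpush.out.equiv_tmul, Algebra.smul_def]
      rfl
    | add x y hx hy => rw [map_add, map_add, hx, hy]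
  have hΨinj : Function.Injective Ψ := fun x y hxy =>
    hpush.out.equiv.injective (by rw [← hΨeq, ← hΨeq, hxy])
  -- the inclusion map
  set ι : B ⊗[A] (dilatation M a) →ₐ[B] B ⊗[A] (Localization S) :=
    Algebra.TensorProduct.map (AlgHom.id B B) (dilatation M a).val with hι
  have hιinj : Function.Injective ι := by
    have h1 : Function.Injective
        (LinearMap.lTensor B ((dilatation M a).val.toLinearMap)) :=
      Module.Flat.lTensor_preserves_injective_linearMap _ Subtype.val_injective
    have h2 : ∀ z, ι z = LinearMap.lTensor B ((dilatation M a).val.toLinearMap) z := by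
      intro z
      induction z using TensorProduct.induction_on with
      | zero => simp
      | tmul y x => rfl
      | add x y hx hy => rw [map_add, map_add, hx, hy]
    intro x y hxy
    exact h1 (by rw [← h2, ← h2, hxy])
  set DB : Subalgebra B (Localization T) :=
    dilatation (fun i => Ideal.map (algebraMap A B) (M i))
      (fun i => algebraMap A B (a i)) with hDB
  -- g maps the dilatation of A into the dilatation of B
  have hgdil : ∀ x ∈ dilatation M a, g x ∈ DB := by
    intro x hx
    induction hx using Algebra.adjoin_induction with
    | mem x hx =>
      obtain ⟨i, m, hm, rfl⟩ := hx
      rw [map_mul, hgmap, hginv]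
      exact Algebra.subset_adjoin ⟨i, algebraMap A B m, Ideal.mem_map_of_mem _ hm, rfl⟩
    | algebraMap r =>
      rw [hgmap]
      exact DB.algebraMap_mem _
    | add x y _ _ hx hy => rw [map_add]; exact add_mem hx hy
    | mul x y _ _ hx hy => rw [map_mul]; exact mul_mem hx hy
  -- generators of DB are in the range
  have hrange : ∀ (i : I), ∀ n ∈ Ideal.map (algebraMap A B) (M i),
      algebraMap B (Localization T) n *
        Ring.inverse (algebraMap B (Localization T) (algebraMap A B (a i))) ∈
        (Ψ.comp ι).range := by
    intro i
    have hle : Ideal.map (algebraMap A B) (M i) ≤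
        Submodule.comap (LinearMap.toSpanSingleton B (Localization T)
          (Ring.inverse (algebraMap B (Localization T) (algebraMap A B (a i)))))
          (Subalgebra.toSubmodule (Ψ.comp ι).range) := by
      rw [Ideal.map]
      refine Ideal.span_le.2 ?_
      rintro _ ⟨m, hm, rfl⟩
      refine ⟨1 ⊗ₜ ⟨_, Algebra.subset_adjoin ⟨i, m, hm, rfl⟩⟩, ?_⟩
      show Ψ (ι (1 ⊗ₜ ⟨algebraMap A (Localization S) m *
        Ring.inverse (algebraMap A (Localization S) (a i)), _⟩)) = _
      rw [hι]
      rw [Algebra.TensorProduct.map_tmul]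
      simp only [AlgHom.coe_id, id_eq, Subalgebra.coe_val]
      rw [hΨtmul, map_one, one_mul]
      show g (algebraMap A (Localization S) m *
        Ring.inverse (algebraMap A (Localization S) (a i))) = _
      rw [map_mul, hgmap, hginv]
      rw [LinearMap.toSpanSingleton_apply, Algebra.smul_def]
    intro n hn
    have := hle hn
    rw [Submodule.mem_comap, LinearMap.toSpanSingleton_apply, Algebra.smul_def] at this
    exact this
  have hrangeEq : (Ψ.comp ι).range = DB := by
    apply le_antisymm
    · rintro x ⟨z, rfl⟩
      induction z using TensorProduct.induction_on with
      | zero => rw [map_zero]; exact zero_mem _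
      | tmul y x =>
        show Ψ (ι (y ⊗ₜ x)) ∈ DB
        rw [hι, Algebra.TensorProduct.map_tmul, hΨtmul]
        exact mul_mem (DB.algebraMap_mem _) (hgdil x.1 x.2)
      | add x y hx hy => rw [map_add]; exact add_mem hx hy
    · rw [hDB]
      refine Algebra.adjoin_le ?_
      rintro x ⟨i, n, hn, rfl⟩
      exact hrange i n hn
  refine ⟨Ψ.comp ι, fun y x => by
      show Ψ (ι (y ⊗ₜ x)) = _
      rw [hι, Algebra.TensorProduct.map_tmul, hΨtmul]
      rfl, hΨinj.comp hιinj, ?_⟩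
  rw [← AlgHom.coe_range, hrangeEq]
end

section
/- Let A be a commutative ring with a multi-center {[M_i, a_i]}_{i∈I}, and let f : A → B be any ring homomorphism. Set b_i = f(a_i) and let N_i ⊆ B be the ideal generated by f(M_i). Let A' = A[{M_i/a_i}_{i∈I}] ⊆ S⁻¹A and B' = B[{N_i/b_i}_{i∈I}] ⊆ T⁻¹B be the dilatations. Then the canonical B-algebra homomorphism Φ : B ⊗_A A' → T⁻¹B (sending b ⊗ x to the product of the image of b with the image of x under the map S⁻¹A → T⁻¹B induced by f) has image exactly B', and its kernel is the set of elements z ∈ B ⊗_A A' annihilated by some b^ν, i.e. z with b^ν · z = 0 for some finitely supported ν ∈ ⊕_{i∈I} ℕ, where b^ν = ∏_i b_i^{ν_i} acts through the B-module structure. Hence B' is the quotient of B ⊗_A A' by its b^{ℕ_I}-torsion. -/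
open scoped TensorProduct

set_option synthInstance.maxHeartbeats 1000000
set_option maxHeartbeats 1000000

lemma ringHom_inverse_aux {R S : Type*} [CommRing R] [CommRing S] (φ : R →+* S) {u : R}
    (hu : IsUnit u) : φ (Ring.inverse u) = Ring.inverse (φ u) := by
  obtain ⟨u, rfl⟩ := hu
  rw [Ring.inverse_unit]
  have h1 : φ ↑u = ↑(Units.map (φ : R →* S) u) := rfl
  have h2 : φ ↑u⁻¹ = ↑(Units.map (φ : R →* S) u)⁻¹ := by rw [← map_inv]; rfl
  rw [h1, h2, Ring.inverse_unit]

lemma exists_finsupp_of_mem_closure_aux {B : Type*} [CommMonoid B] {I : Type*} {b : I → B}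
    {x : B} (hx : x ∈ Submonoid.closure (Set.range b)) :
    ∃ ν : I →₀ ℕ, x = ν.prod fun i n => b i ^ n := by
  classical
  induction hx using Submonoid.closure_induction with
  | mem x hxm =>
    obtain ⟨i, rfl⟩ := hxm
    refine ⟨Finsupp.single i 1, ?_⟩
    rw [Finsupp.prod_single_index, pow_one]
    exact pow_zero _
  | one => exact ⟨0, by simp⟩
  | mul x y _ _ hx hy =>
    obtain ⟨ν₁, rfl⟩ := hx
    obtain ⟨ν₂, rfl⟩ := hy
    exact ⟨ν₁ + ν₂, by
      rw [Finsupp.prod_add_index (fun i _ => pow_zero _) (fun i _ m n => pow_add _ m n)]⟩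

lemma finsupp_prod_mem_closure_aux {B : Type*} [CommMonoid B] {I : Type*} (b : I → B)
    (ν : I →₀ ℕ) : (ν.prod fun i n => b i ^ n) ∈ Submonoid.closure (Set.range b) :=
  Submonoid.prod_mem _ fun i _ => pow_mem (Submonoid.subset_closure (Set.mem_range_self i)) _

lemma exists_smul_eq_tmul_one_aux {A B : Type*} [CommRing A] [CommRing B] [Algebra A B]
    {I : Type*} (M : I → Ideal A) (a : I → A) (z : B ⊗[A] (dilatation M a)) :
    ∃ s ∈ Submonoid.closure (Set.range a), ∃ y : B,
      (algebraMap A B s) • z = y ⊗ₜ[A] (1 : dilatation M a) := by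
  induction z using TensorProduct.induction_on with
  | zero => exact ⟨1, one_mem _, 0, by simp [TensorProduct.zero_tmul]⟩
  | tmul y x =>
    obtain ⟨⟨m, s⟩, hms⟩ := IsLocalization.surj (Submonoid.closure (Set.range a))
      (x : Localization (Submonoid.closure (Set.range a)))
    refine ⟨s, s.2, algebraMap A B m * y, ?_⟩
    have hx : (s : A) • x = algebraMap A (dilatation M a) m := by
      apply Subtype.ext
      show (s : A) • (x : Localization (Submonoid.closure (Set.range a))) = _
      rw [Algebra.smul_def, mul_comm]
      exact hms
    rw [algebraMap_smul, TensorProduct.smul_tmul', TensorProduct.smul_tmul, hx,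
      Algebra.algebraMap_eq_smul_one, TensorProduct.tmul_smul, TensorProduct.smul_tmul',
      Algebra.smul_def]
  | add z₁ z₂ h₁ h₂ =>
    obtain ⟨s₁, hs₁, y₁, hy₁⟩ := h₁
    obtain ⟨s₂, hs₂, y₂, hy₂⟩ := h₂
    refine ⟨s₁ * s₂, mul_mem hs₁ hs₂,
      algebraMap A B s₂ * y₁ + algebraMap A B s₁ * y₂, ?_⟩
    have e1 : (algebraMap A B (s₁ * s₂)) • z₁ = (algebraMap A B s₂ * y₁) ⊗ₜ[A] 1 := by
      rw [map_mul, mul_comm, mul_smul, hy₁, TensorProduct.smul_tmul', smul_eq_mul]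
    have e2 : (algebraMap A B (s₁ * s₂)) • z₂ = (algebraMap A B s₁ * y₂) ⊗ₜ[A] 1 := by
      rw [map_mul, mul_smul, hy₂, TensorProduct.smul_tmul', smul_eq_mul]
    rw [smul_add, e1, e2, ← TensorProduct.add_tmul]

/-- Base change for dilatations: for any `A`-algebra `B`, with `b_i = f(a_i)` and
`N_i = f(M_i)·B`, the canonical `B`-algebra map `Φ : B ⊗_A A[{M_i/a_i}] → T⁻¹B`,
`y ⊗ x ↦ (image of y)·(image of x)`, has image the dilatation `B[{N_i/b_i}]` and
kernel the `b^{ℕ_I}`-torsion: `Φ z = 0` iff `b^ν • z = 0` for some finitely supported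
`ν`. Hence `B[{N_i/b_i}]` is the quotient of `B ⊗_A A[{M_i/a_i}]` by this torsion. -/
theorem dilatation_base_change {A B : Type*} [CommRing A] [CommRing B] [Algebra A B]
    {I : Type*} (M : I → Ideal A) (a : I → A) :
    ∃ Φ : B ⊗[A] (dilatation M a) →ₐ[B]
        Localization (Submonoid.closure (Set.range fun i => algebraMap A B (a i))),
      (∀ (y : B) (x : dilatation M a),
        Φ (y ⊗ₜ x) =
          algebraMap B (Localization (Submonoid.closure
              (Set.range fun i => algebraMap A B (a i)))) y *
            IsLocalization.map
              (Localization (Submonoid.closure (Set.range fun i => algebraMap A B (a i))))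
              (algebraMap A B)
              (closure_range_le_comap (algebraMap A B) a _ fun _ => rfl)
              (x : Localization (Submonoid.closure (Set.range a)))) ∧
      Set.range Φ =
        (dilatation (fun i => Ideal.map (algebraMap A B) (M i))
          (fun i => algebraMap A B (a i)) :
            Set (Localization (Submonoid.closure
              (Set.range fun i => algebraMap A B (a i))))) ∧
      ∀ z : B ⊗[A] (dilatation M a),
        Φ z = 0 ↔ ∃ ν : I →₀ ℕ, (ν.prod fun i n => (algebraMap A B (a i)) ^ n) • z = 0 := by
  classical
  let S := Submonoid.closure (Set.range a)
  let T := Submonoid.closure (Set.range fun i => algebraMap A B (a i))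
  let L := Localization T
  let hle := closure_range_le_comap (algebraMap A B) a
      (fun i => algebraMap A B (a i)) fun _ => rfl
  let g0 : Localization S →+* L := IsLocalization.map (Localization T) (algebraMap A B) hle
  let g : dilatation M a →ₐ[A] L :=
    { toRingHom := g0.comp (dilatation M a).val.toRingHom
      commutes' := fun r => by
        show g0 (algebraMap A (Localization S) r) = algebraMap A L r
        rw [IsLocalization.map_eq hle r, ← IsScalarTower.algebraMap_apply] }
  let Φ : B ⊗[A] (dilatation M a) →ₐ[B] L :=
    Algebra.TensorProduct.lift (Algebra.ofId B L) g (fun x y => mul_comm _ _)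
  have htmul : ∀ (y : B) (x : dilatation M a), Φ (y ⊗ₜ x) = algebraMap B L y * g0 x :=
    fun y x => by simp [Φ, Algebra.ofId_apply, g, g0]
  set B' := dilatation (fun i => Ideal.map (algebraMap A B) (M i))
    (fun i => algebraMap A B (a i)) with hB'
  -- image of a generator fraction under g0
  have hgen : ∀ (i : I) (m : A),
      g0 (algebraMap A (Localization S) m *
        Ring.inverse (algebraMap A (Localization S) (a i))) =
      algebraMap B L (algebraMap A B m) *
        Ring.inverse (algebraMap B L (algebraMap A B (a i))) := by
    intro i m
    rw [map_mul, IsLocalization.map_eq hle,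
      ringHom_inverse_aux _ (IsLocalization.map_units (Localization S)
        ⟨a i, Submonoid.subset_closure (Set.mem_range_self i)⟩),
      IsLocalization.map_eq hle]
  refine ⟨Φ, htmul, ?_, ?_⟩
  · -- range
    have hsub : ∀ w ∈ dilatation M a, g0 w ∈ B' := by
      intro w hw
      induction hw using Algebra.adjoin_induction with
      | mem w hw =>
        obtain ⟨i, m, hm, rfl⟩ := hw
        rw [hgen]
        exact Algebra.subset_adjoin
          ⟨i, algebraMap A B m, Ideal.mem_map_of_mem _ hm, rfl⟩
      | algebraMap r =>
        rw [IsLocalization.map_eq hle]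
        exact B'.algebraMap_mem _
      | add u v _ _ hu hv => rw [map_add]; exact add_mem hu hv
      | mul u v _ _ hu hv => rw [map_mul]; exact mul_mem hu hv
    apply le_antisymm
    · rintro _ ⟨z, rfl⟩
      induction z using TensorProduct.induction_on with
      | zero => rw [map_zero]; exact zero_mem B'
      | tmul y x =>
        rw [htmul]
        exact mul_mem (B'.algebraMap_mem y) (hsub x x.2)
      | add z₁ z₂ h₁ h₂ => rw [map_add]; exact add_mem h₁ h₂
    · have : B' ≤ Φ.range := by
        apply Algebra.adjoin_le
        rintro w ⟨i, n, hn, rfl⟩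
        induction hn using Submodule.span_induction with
        | mem w hw =>
          obtain ⟨m, hm, rfl⟩ := hw
          refine ⟨1 ⊗ₜ ⟨algebraMap A (Localization S) m *
            Ring.inverse (algebraMap A (Localization S) (a i)),
            Algebra.subset_adjoin ⟨i, m, hm, rfl⟩⟩, ?_⟩
          show Φ (1 ⊗ₜ[A] _) = _
          rw [htmul, map_one, one_mul]
          exact hgen i m
        | zero =>
          rw [map_zero, zero_mul]
          exact zero_mem Φ.range
        | add u v _ _ hu hv =>
          rw [map_add, add_mul]
          exact add_mem hu hv
        | smul c u _ hu =>
          rw [smul_eq_mul, map_mul, mul_assoc]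
          exact mul_mem ⟨algebraMap B _ c, Φ.commutes c⟩ hu
      intro w hw
      obtain ⟨z, hz⟩ := this hw
      exact ⟨z, hz⟩
  · -- kernel
    intro z
    constructor
    · intro hz
      obtain ⟨s, hs, y, hsy⟩ := exists_smul_eq_tmul_one_aux M a z
      have h1 : algebraMap B L y = 0 := by
        have h2 := congrArg Φ hsy
        rw [map_smul, hz, smul_zero, htmul, OneMemClass.coe_one, map_one, mul_one] at h2
        exact h2.symm
      obtain ⟨⟨t, ht⟩, hty⟩ := (IsLocalization.map_eq_zero_iff T L y).mp h1
      have hmem : t * algebraMap A B s ∈ T := mul_mem ht (hle hs)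
      obtain ⟨ν, hν⟩ := exists_finsupp_of_mem_closure_aux hmem
      refine ⟨ν, ?_⟩
      rw [← hν, mul_smul, hsy, TensorProduct.smul_tmul', smul_eq_mul, hty,
        TensorProduct.zero_tmul]
    · rintro ⟨ν, hν⟩
      have hu : (ν.prod fun i n => (algebraMap A B (a i)) ^ n) ∈ T :=
        finsupp_prod_mem_closure_aux _ ν
      have h2 : algebraMap B L (ν.prod fun i n => (algebraMap A B (a i)) ^ n) * Φ z = 0 := by
        rw [← Algebra.smul_def, ← map_smul, hν, map_zero]
      have hunit : IsUnit (algebraMap B L (ν.prod fun i n => (algebraMap A B (a i)) ^ n)) :=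
        IsLocalization.map_units L ⟨_, hu⟩
      obtain ⟨u, huu⟩ := hunit
      have := congrArg (fun w => (↑u⁻¹ : L) * w) h2
      simpa [← huu, ← mul_assoc] using this
end

section
/- Let A be a commutative ring, S ⊆ A a multiplicative submonoid, λ : A → S⁻¹A the localization map, and let C be any sub-A-algebra of S⁻¹A. Then C is a (multi-centered) dilatation of A: there exist an index type I, elements a_i ∈ S and ideals M_i ⊆ A (i ∈ I) such that C equals the sub-A-algebra of S⁻¹A generated by the fractions λ(m)·λ(a_i)⁻¹ for i ∈ I and m ∈ M_i. -/
universe u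

namespace IsLocalization

variable {R : Type*} [CommRing R] {M : Submonoid R} {B : Type*} [CommRing B] [Algebra R B]
  [IsLocalization M B]

theorem mk'_eq_mul_ringInverse (r : R) (s : M) :
    mk' B r s = algebraMap R B r * Ring.inverse (algebraMap R B s) :=
  (Ring.eq_mul_inverse_iff_mul_eq _ _ _ (map_units B s)).mpr (mk'_spec B r s)

theorem mul_ringInverse_mem_of_mk'_mem {C : Subalgebra R B} {r : R} {s : M}
    (hC : mk' B r s ∈ C) {m : R} (hm : m ∈ Ideal.span {r}) :
    algebraMap R B m * Ring.inverse (algebraMap R B s) ∈ C := by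
  obtain ⟨t, rfl⟩ := Ideal.mem_span_singleton'.mp hm
  rw [map_mul, mul_assoc, ← mk'_eq_mul_ringInverse]
  exact C.mul_mem (C.algebraMap_mem t) hC

end IsLocalization

/-- Every sub-`A`-algebra of a localization `S⁻¹A` is a multi-centered dilatation of `A`:
there are an index type `I`, elements `a_i ∈ S` and ideals `M_i ⊆ A` such that `C` is the
sub-`A`-algebra of `S⁻¹A` generated by the fractions `λ(m)·λ(a_i)⁻¹`, `i ∈ I`, `m ∈ M_i`. -/
theorem subalgebra_of_localization_is_dilatation {A : Type u} [CommRing A]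
    (S : Submonoid A) (C : Subalgebra A (Localization S)) :
    ∃ (I : Type u) (a : I → A) (_ : ∀ i, a i ∈ S) (M : I → Ideal A),
      C = Algebra.adjoin A {x : Localization S | ∃ i, ∃ m ∈ M i,
        x = algebraMap A (Localization S) m *
            Ring.inverse (algebraMap A (Localization S) (a i))} := by
  -- Index by the elements `c = r_c / s_c` of `C` themselves, with centre `s_c` and ideal `(r_c)`.
  choose r s hrs using fun c : C => IsLocalization.exists_mk'_eq S (c : Localization S)
  refine ⟨C, fun c => s c, fun c => (s c).2, fun c => Ideal.span {r c}, le_antisymm ?_ ?_⟩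
  · intro c hc
    refine Algebra.subset_adjoin ⟨⟨c, hc⟩, _, Ideal.mem_span_singleton_self _, ?_⟩
    rw [← IsLocalization.mk'_eq_mul_ringInverse, hrs]
  · rw [Algebra.adjoin_le_iff]
    rintro x ⟨c, m, hm, rfl⟩
    exact IsLocalization.mul_ringInverse_mem_of_mk'_mem (by rw [hrs]; exact c.2) hm
end

section
/- Let A be a commutative ring and let a, g_1, …, g_n be a weakly regular sequence in A (in particular a is a non-zero-divisor; weak regularity implies the H_1-regularity hypothesis of the cited result). Let d_1, …, d_n be positive integers, let A_a be the localization of A away from a with localization map λ : A → A_a, and let φ : A[x_1, …, x_n] → A_a be the A-algebra homomorphism from the polynomial ring with φ(x_i) = λ(g_i)·λ(a)^{-d_i}. Then the kernel of φ is the ideal generated by g_1 − a^{d_1}x_1, …, g_n − a^{d_n}x_n, and the image of φ is the dilatation A[(g_1)/a^{d_1}, …, (g_n)/a^{d_n}], i.e. the sub-A-algebra of A_a generated by λ(g_1)·λ(a)^{-d_1}, …, λ(g_n)·λ(a)^{-d_n}. Consequently A[(g_1)/a^{d_1}, …, (g_n)/a^{d_n}] ≅ A[x_1, …, x_n]/(g_1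 − a^{d_1}x_1, …, g_n − a^{d_n}x_n) as A-algebras. -/
open Polynomial in
private lemma aux_poly_Creg {A : Type*} [CommRing A] {K : Ideal A} {b : A}
    (hb : ∀ x, b * x ∈ K → x ∈ K) {p : A[X]}
    (hp : C b * p ∈ K.map (C : A →+* A[X])) :
    p ∈ K.map (C : A →+* A[X]) := by
  rw [Ideal.mem_map_C_iff] at hp ⊢
  exact fun m => hb _ (by simpa [Polynomial.coeff_C_mul] using hp m)

open MvPolynomial in
private lemma aux_mv_Creg {A : Type*} [CommRing A] {σ : Type*} {K : Ideal A} {b : A}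
    (hb : ∀ x, b * x ∈ K → x ∈ K) {p : MvPolynomial σ A}
    (hp : C b * p ∈ K.map (C : A →+* MvPolynomial σ A)) :
    p ∈ K.map (C : A →+* MvPolynomial σ A) := by
  rw [MvPolynomial.mem_map_C_iff] at hp ⊢
  exact fun m => hb _ (by simpa [MvPolynomial.coeff_C_mul] using hp m)

open Polynomial in
private lemma aux_poly_Ca {A : Type*} [CommRing A] {a : A}
    (ha : ∀ x : A, a * x = 0 → x = 0) {p : A[X]} (hp : C a * p = 0) : p = 0 := by
  ext m
  have := congrArg (fun q => Polynomial.coeff q m) hp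
  simpa using ha _ (by simpa [Polynomial.coeff_C_mul] using this)

open MvPolynomial in
private lemma aux_mv_Ca {A : Type*} [CommRing A] {σ : Type*} {a : A}
    (ha : ∀ x : A, a * x = 0 → x = 0) {p : MvPolynomial σ A} (hp : C a * p = 0) : p = 0 := by
  ext m
  have := congrArg (fun q => MvPolynomial.coeff m q) hp
  simpa using ha _ (by simpa [MvPolynomial.coeff_C_mul] using this)

open Polynomial in
private lemma aux_onestep {S : Type*} [CommRing S] {a g : S} {d : ℕ} (hd : 0 < d)
    (ha : ∀ x : S, a * x = 0 → x = 0)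
    (hg : ∀ x, g * x ∈ Ideal.span {a} → x ∈ Ideal.span {a})
    {q : S[X]}
    (hq : C a * q ∈ Ideal.span {C g - C a ^ d * X}) :
    q ∈ Ideal.span {C g - C a ^ d * X} := by
  obtain ⟨h, hh⟩ := Ideal.mem_span_singleton'.mp hq
  obtain ⟨d', rfl⟩ : ∃ e, d = e + 1 := ⟨d - 1, by omega⟩
  have hmap : Ideal.span {(C a : S[X])} = (Ideal.span {a}).map (C : S →+* S[X]) := by
    rw [Ideal.map_span, Set.image_singleton]
  have h1 : C g * h ∈ (Ideal.span {a}).map (C : S →+* S[X]) := by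
    rw [← hmap, Ideal.mem_span_singleton']
    refine ⟨q + C a ^ d' * X * h, ?_⟩
    have : (q + C a ^ d' * X * h) * C a = C a * q + C a ^ (d' + 1) * X * h := by ring
    rw [this, ← hh]; ring
  have h2 := aux_poly_Creg hg h1
  rw [← hmap, Ideal.mem_span_singleton'] at h2
  obtain ⟨h', hh'⟩ := h2
  rw [Ideal.mem_span_singleton']
  refine ⟨h', ?_⟩
  have hz : C a * (h' * (C g - C a ^ (d' + 1) * X) - q) = 0 := by
    rw [mul_sub, ← hh, ← hh']; ring
  exact sub_eq_zero.mp (aux_poly_Ca ha hz)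

open MvPolynomial in
private noncomputable def EE (A : Type*) [CommRing A] (n : ℕ) :
    MvPolynomial (Fin (n+1)) A ≃ₐ[A] Polynomial (MvPolynomial (Fin n) A) :=
  (renameEquiv A finSuccEquivLast).trans (optionEquivLeft A (Fin n))

open MvPolynomial in
private lemma EE_X_castSucc {A : Type*} [CommRing A] {n : ℕ} (i : Fin n) :
    EE A n (X i.castSucc) = Polynomial.C (X i) := by
  simp [EE, finSuccEquivLast_castSucc, optionEquivLeft_X_some]

open MvPolynomial in
private lemma EE_X_last {A : Type*} [CommRing A] {n : ℕ} :
    EE A n (X (Fin.last n)) = Polynomial.X := by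
  simp [EE, finSuccEquivLast_last, optionEquivLeft_X_none]

open MvPolynomial in
private lemma EE_C {A : Type*} [CommRing A] {n : ℕ} (r : A) :
    EE A n (C r) = Polynomial.C (C r) := by
  simp [EE, optionEquivLeft_C]

open MvPolynomial in
private lemma aux_main {A : Type*} [CommRing A] {a : A}
    (ha : ∀ x : A, a * x = 0 → x = 0) :
    ∀ (n : ℕ) (g : Fin n → A) (d : Fin n → ℕ), (∀ i, 0 < d i) →
    (∀ i : Fin n, ∀ x : A, g i * x ∈ Ideal.span (insert a (g '' {j | j < i})) →
        x ∈ Ideal.span (insert a (g '' {j | j < i}))) →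
    ∀ q : MvPolynomial (Fin n) A,
      C a * q ∈ Ideal.span (Set.range fun i : Fin n => C (g i) - C a ^ (d i) * X i) →
      q ∈ Ideal.span (Set.range fun i : Fin n => C (g i) - C a ^ (d i) * X i) := by
  intro n
  induction n with
  | zero =>
      intro g d _ _ q hq
      have he : (Set.range fun i : Fin 0 => C (g i) - C a ^ (d i) * X i) = ∅ :=
        Set.range_eq_empty _
      rw [he, Ideal.span_empty, Ideal.mem_bot] at hq ⊢
      exact aux_mv_Ca ha hq
  | succ n IH =>
      intro g d hd hg q hq
      classical
      set g' : Fin n → A := g ∘ Fin.castSucc with hg'def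
      set d' : Fin n → ℕ := d ∘ Fin.castSucc with hd'def
      set I' : Ideal (MvPolynomial (Fin n) A) :=
        Ideal.span (Set.range fun i : Fin n => C (g' i) - C a ^ (d' i) * X i) with hI'def
      have hset : ∀ i : Fin n, g' '' {j | j < i} = g '' {j : Fin (n+1) | j < i.castSucc} := by
        intro i
        ext x
        constructor
        · rintro ⟨j, hj, rfl⟩
          exact ⟨j.castSucc, by simpa [Fin.castSucc_lt_castSucc_iff] using hj, rfl⟩
        · rintro ⟨j, hj, rfl⟩
          have hjv : (j : ℕ) < n := lt_of_lt_of_le hj (by simp)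
          refine ⟨⟨j, hjv⟩, hj, ?_⟩
          exact congrArg g (Fin.ext rfl)
      have hlast : g '' {j : Fin (n+1) | j < Fin.last n} = Set.range g' := by
        ext x
        constructor
        · rintro ⟨j, hj, rfl⟩
          have hjv : (j : ℕ) < n := hj
          refine ⟨⟨j, hjv⟩, ?_⟩
          exact congrArg g (Fin.ext rfl)
        · rintro ⟨i, rfl⟩
          exact ⟨i.castSucc, Fin.castSucc_lt_last i, rfl⟩
      have IHq : ∀ p, C a * p ∈ I' → p ∈ I' := by
        intro p hp
        refine IH g' d' (fun i => hd _) ?_ p hp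
        intro i x hx
        rw [hset i] at hx ⊢
        exact hg i.castSucc x hx
      have habar : ∀ s : MvPolynomial (Fin n) A ⧸ I',
          Ideal.Quotient.mk I' (C a) * s = 0 → s = 0 := by
        intro s hs
        obtain ⟨p, rfl⟩ := Ideal.Quotient.mk_surjective s
        rw [← map_mul, Ideal.Quotient.eq_zero_iff_mem] at hs
        exact Ideal.Quotient.eq_zero_iff_mem.mpr (IHq p hs)
      set K : Ideal A := Ideal.span (insert a (Set.range g')) with hKdef
      have hKmap : I' ⊔ Ideal.span {(C a : MvPolynomial (Fin n) A)}
          = K.map (C : A →+* MvPolynomial (Fin n) A) := by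
        apply le_antisymm
        · apply sup_le
          · rw [Ideal.span_le]
            rintro _ ⟨i, rfl⟩
            obtain ⟨e, he⟩ : ∃ e, d' i = e + 1 :=
              ⟨d' i - 1, by have : 0 < d' i := hd i.castSucc; omega⟩
            have h1 : (C (g' i) : MvPolynomial (Fin n) A) ∈ K.map C :=
              Ideal.mem_map_of_mem _ (Ideal.subset_span (Set.mem_insert_of_mem _ ⟨i, rfl⟩))
            have h2 : (C a : MvPolynomial (Fin n) A) ∈ K.map C :=
              Ideal.mem_map_of_mem _ (Ideal.subset_span (Set.mem_insert _ _))
            have h3 : (C a ^ (d' i) * X i : MvPolynomial (Fin n) A) ∈ K.map C := by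
              rw [he, pow_succ]
              exact Ideal.mul_mem_right _ _ (Ideal.mul_mem_left _ _ h2)
            exact Submodule.sub_mem _ h1 h3
          · rw [Ideal.span_le]
            rintro _ rfl
            exact Ideal.mem_map_of_mem _ (Ideal.subset_span (Set.mem_insert _ _))
        · rw [Ideal.map_span, Ideal.span_le]
          rintro _ ⟨x, hx, rfl⟩
          rcases Set.mem_insert_iff.mp hx with rfl | ⟨i, rfl⟩
          · exact Ideal.mem_sup_right (Ideal.subset_span rfl)
          · obtain ⟨e, he⟩ : ∃ e, d' i = e + 1 :=
              ⟨d' i - 1, by have : 0 < d' i := hd i.castSucc; omega⟩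
            have h1 : (C (g' i) - C a ^ (d' i) * X i : MvPolynomial (Fin n) A) ∈ I' :=
              Ideal.subset_span ⟨i, rfl⟩
            have h2 : (C a ^ (d' i) * X i : MvPolynomial (Fin n) A)
                ∈ Ideal.span {(C a : MvPolynomial (Fin n) A)} := by
              rw [he, pow_succ']
              exact Ideal.mul_mem_right _ _ (Ideal.mul_mem_right _ _ (Ideal.subset_span rfl))
            have := Submodule.add_mem _ (Ideal.mem_sup_left h1) (Ideal.mem_sup_right h2)
            simpa using this
      have hblast : ∀ x, g (Fin.last n) * x ∈ K → x ∈ K := by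
        intro x hx
        have hKeq : K = Ideal.span (insert a (g '' {j | j < Fin.last n})) := by
          rw [hKdef, hlast]
        rw [hKeq] at hx ⊢
        exact hg (Fin.last n) x hx
      have hgbar : ∀ s : MvPolynomial (Fin n) A ⧸ I',
          Ideal.Quotient.mk I' (C (g (Fin.last n))) * s
              ∈ Ideal.span {Ideal.Quotient.mk I' (C a)} →
            s ∈ Ideal.span {Ideal.Quotient.mk I' (C a)} := by
        intro s hs
        obtain ⟨p, rfl⟩ := Ideal.Quotient.mk_surjective s
        rw [Ideal.mem_span_singleton'] at hs
        obtain ⟨w, hw⟩ := hs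
        obtain ⟨t, rfl⟩ := Ideal.Quotient.mk_surjective w
        have hw2 : Ideal.Quotient.mk I' (C (g (Fin.last n)) * p)
            = Ideal.Quotient.mk I' (C a * t) := by
          rw [map_mul, map_mul, ← hw]
          exact mul_comm _ _
        have hsub : C (g (Fin.last n)) * p - C a * t ∈ I' := Ideal.Quotient.eq.mp hw2
        have hmem : C (g (Fin.last n)) * p ∈ K.map (C : A →+* MvPolynomial (Fin n) A) := by
          rw [← hKmap]
          have h2 : (C a * t : MvPolynomial (Fin n) A)
              ∈ Ideal.span {(C a : MvPolynomial (Fin n) A)} :=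
            Ideal.mul_mem_right t _ (Ideal.subset_span rfl)
          have := Submodule.add_mem _ (Ideal.mem_sup_left hsub) (Ideal.mem_sup_right h2)
          simpa using this
        have hp2 := aux_mv_Creg hblast hmem
        rw [← hKmap] at hp2
        obtain ⟨u, hu, v, hv, huv⟩ := Submodule.mem_sup.mp hp2
        obtain ⟨wv, hwv⟩ := Ideal.mem_span_singleton'.mp hv
        rw [Ideal.mem_span_singleton']
        refine ⟨Ideal.Quotient.mk I' wv, ?_⟩
        rw [← map_mul, ← huv, map_add, Ideal.Quotient.eq_zero_iff_mem.mpr hu, zero_add, ← hwv]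
      set Fgen : Fin (n+1) → MvPolynomial (Fin (n+1)) A :=
        (fun i => C (g i) - C a ^ (d i) * X i) with hFgendef
      set FP : Polynomial (MvPolynomial (Fin n) A) :=
        Polynomial.C (C (g (Fin.last n)))
          - Polynomial.C (C a) ^ (d (Fin.last n)) * Polynomial.X with hFPdef
      set Fbar : Polynomial (MvPolynomial (Fin n) A ⧸ I') :=
        Polynomial.C (Ideal.Quotient.mk I' (C (g (Fin.last n))))
          - Polynomial.C (Ideal.Quotient.mk I' (C a)) ^ (d (Fin.last n)) * Polynomial.X
        with hFbardef
      set θ : Polynomial (MvPolynomial (Fin n) A)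
          →+* Polynomial (MvPolynomial (Fin n) A ⧸ I') :=
        Polynomial.mapRingHom (Ideal.Quotient.mk I') with hθdef
      have hEcast : ∀ i : Fin n,
          EE A n (Fgen i.castSucc) = Polynomial.C (C (g' i) - C a ^ (d' i) * X i) := by
        intro i
        simp [hFgendef, hg'def, hd'def, map_sub, map_mul, map_pow, EE_C, EE_X_castSucc]
      have hElast : EE A n (Fgen (Fin.last n)) = FP := by
        simp [hFgendef, hFPdef, map_sub, map_mul, map_pow, EE_C, EE_X_last]
      have hθFP : θ FP = Fbar := by
        simp [hθdef, hFPdef, hFbardef, Polynomial.map_sub, Polynomial.map_mul,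
          Polynomial.map_pow, Polynomial.map_C, Polynomial.map_X]
      have hkerθ : RingHom.ker θ = I'.map (Polynomial.C) := by
        rw [hθdef, Polynomial.ker_mapRingHom, Ideal.mk_ker]
      have hfwd : ∀ z ∈ Ideal.span (Set.range Fgen), θ (EE A n z) ∈ Ideal.span {Fbar} := by
        intro z hz
        have hle : Ideal.span (Set.range Fgen) ≤ Ideal.comap
            (θ.comp (EE A n : MvPolynomial (Fin (n+1)) A →+* Polynomial (MvPolynomial (Fin n) A)))
            (Ideal.span {Fbar}) := by
          rw [Ideal.span_le]
          rintro _ ⟨i, rfl⟩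
          simp only [SetLike.mem_coe, Ideal.mem_comap, RingHom.coe_comp,
            Function.comp_apply, RingHom.coe_coe]
          induction i using Fin.lastCases with
          | last =>
              rw [hElast, hθFP]
              exact Ideal.subset_span rfl
          | cast i =>
              rw [hEcast i]
              have hc : θ (Polynomial.C (C (g' i) - C a ^ (d' i) * X i))
                  = Polynomial.C (Ideal.Quotient.mk I' (C (g' i) - C a ^ (d' i) * X i)) := by
                simp [hθdef]
              have hgen : (C (g' i) - C a ^ (d' i) * X i) ∈ I' := by
                rw [hI'def]
                exact Ideal.subset_span ⟨i, rfl⟩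
              rw [hc, Ideal.Quotient.eq_zero_iff_mem.mpr hgen, map_zero]
              exact Ideal.zero_mem _
        exact hle hz
      have hback : ∀ z, θ (EE A n z) ∈ Ideal.span {Fbar} →
          z ∈ Ideal.span (Set.range Fgen) := by
        intro z hz
        rw [Ideal.mem_span_singleton'] at hz
        obtain ⟨w, hw⟩ := hz
        obtain ⟨w', hw'⟩ := Polynomial.map_surjective _ Ideal.Quotient.mk_surjective w
        have hθw' : θ w' = w := by simpa [hθdef] using hw'
        have hker_mem : EE A n z - w' * FP ∈ RingHom.ker θ := by
          rw [RingHom.mem_ker, map_sub, map_mul, hθFP, hθw', hw]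
          exact sub_self _
        rw [hkerθ] at hker_mem
        have hle2 : I' ≤ Ideal.comap
            (((EE A n).symm : Polynomial (MvPolynomial (Fin n) A) →+* MvPolynomial (Fin (n+1)) A).comp
              (Polynomial.C : MvPolynomial (Fin n) A →+* Polynomial (MvPolynomial (Fin n) A)))
            (Ideal.span (Set.range Fgen)) := by
          rw [hI'def, Ideal.span_le]
          rintro _ ⟨i, rfl⟩
          simp only [SetLike.mem_coe, Ideal.mem_comap, RingHom.coe_comp,
            Function.comp_apply, RingHom.coe_coe]
          rw [← hEcast i, AlgEquiv.symm_apply_apply]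
          exact Ideal.subset_span ⟨i.castSucc, rfl⟩
        have hmap2 : Ideal.map
            ((EE A n).symm : Polynomial (MvPolynomial (Fin n) A) →+* MvPolynomial (Fin (n+1)) A)
            (I'.map Polynomial.C) ≤ Ideal.span (Set.range Fgen) := by
          rw [Ideal.map_map, Ideal.map_le_iff_le_comap]
          exact hle2
        have hu : (EE A n).symm (EE A n z - w' * FP) ∈ Ideal.span (Set.range Fgen) :=
          hmap2 (Ideal.mem_map_of_mem _ hker_mem)
        have hzeq : z = (EE A n).symm w' * Fgen (Fin.last n)
            + (EE A n).symm (EE A n z - w' * FP) := by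
          have h1 : (EE A n).symm FP = Fgen (Fin.last n) := by
            rw [← hElast, AlgEquiv.symm_apply_apply]
          rw [map_sub, map_mul, h1, AlgEquiv.symm_apply_apply]
          ring
        rw [hzeq]
        exact Submodule.add_mem _
          (Ideal.mul_mem_left _ _ (Ideal.subset_span ⟨Fin.last n, rfl⟩)) hu
      have h0 : θ (EE A n (C a * q))
          = Polynomial.C (Ideal.Quotient.mk I' (C a)) * θ (EE A n q) := by
        rw [map_mul, map_mul, EE_C]
        simp [hθdef]
      have h1 := hfwd _ hq
      rw [h0, hFbardef] at h1
      have h2 := aux_onestep (hd (Fin.last n)) habar hgbar h1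
      rw [← hFbardef] at h2
      exact hback q h2


open MvPolynomial in
private lemma aux_claimA {A : Type*} [CommRing A] (a : A) {n : ℕ} (g : Fin n → A)
    (d : Fin n → ℕ) (p : MvPolynomial (Fin n) A) :
    ∃ (K : ℕ) (c : A), C a ^ K * p - C c ∈
      Ideal.span (Set.range fun i : Fin n => C (g i) - C a ^ (d i) * X i) := by
  induction p using MvPolynomial.induction_on with
  | C r => exact ⟨0, r, by simp⟩
  | add p q hp hq =>
      obtain ⟨K1, c1, h1⟩ := hp
      obtain ⟨K2, c2, h2⟩ := hq
      refine ⟨K1 + K2, a ^ K2 * c1 + a ^ K1 * c2, ?_⟩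
      have heq : C a ^ (K1 + K2) * (p + q) - C (a ^ K2 * c1 + a ^ K1 * c2)
          = C a ^ K2 * (C a ^ K1 * p - C c1) + C a ^ K1 * (C a ^ K2 * q - C c2) := by
        simp only [map_add, map_mul, map_pow]
        ring
      rw [heq]
      exact Submodule.add_mem _ (Ideal.mul_mem_left _ _ h1) (Ideal.mul_mem_left _ _ h2)
  | mul_X p i hp =>
      obtain ⟨K, c, h⟩ := hp
      refine ⟨K + d i, c * g i, ?_⟩
      have hFi : (C (g i) - C a ^ (d i) * X i) ∈
          Ideal.span (Set.range fun i : Fin n => C (g i) - C a ^ (d i) * X i) :=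
        Ideal.subset_span ⟨i, rfl⟩
      have heq : C a ^ (K + d i) * (p * X i) - C (c * g i)
          = (C a ^ (d i) * X i) * (C a ^ K * p - C c)
            - C c * (C (g i) - C a ^ (d i) * X i) := by
        simp only [map_mul]
        ring
      rw [heq]
      exact Submodule.sub_mem _ (Ideal.mul_mem_left _ _ h) (Ideal.mul_mem_left _ _ hFi)

private lemma aux_pow {A : Type*} [CommRing A] {a : A}
    (ha : ∀ x : A, a * x = 0 → x = 0) : ∀ (k : ℕ) (c : A), a ^ k * c = 0 → c = 0 := by
  intro k
  induction k with
  | zero => intro c hc; simpa using hc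
  | succ k IH =>
      intro c hc
      have : a ^ k * (a * c) = 0 := by rw [show a ^ k * (a * c) = a ^ (k+1) * c from by ring, hc]
      exact ha c (IH _ this)

private lemma aux_extract {A : Type*} [CommRing A] {n : ℕ} {a : A} {g : Fin n → A}
    (hreg : RingTheory.Sequence.IsWeaklyRegular A (a :: List.ofFn g)) :
    (∀ x : A, a * x = 0 → x = 0) ∧
    (∀ i : Fin n, ∀ x : A, g i * x ∈ Ideal.span (insert a (g '' {j | j < i})) →
        x ∈ Ideal.span (insert a (g '' {j | j < i}))) := by
  have htop : ∀ (I : Ideal A), (I • ⊤ : Submodule A A) = I := by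
    intro I
    apply le_antisymm
    · exact Submodule.smul_le.mpr fun r hr m _ => by
        simpa [smul_eq_mul] using I.mul_mem_right m hr
    · intro x hx
      have h1 := Submodule.smul_mem_smul hx (Submodule.mem_top (R := A) (x := (1 : A)))
      simpa [smul_eq_mul] using h1
  constructor
  · intro x hx
    have h1 : IsSMulRegular A a :=
      ((RingTheory.Sequence.isWeaklyRegular_cons_iff A a (List.ofFn g)).mp hreg).1
    have := h1 (a₁ := x) (a₂ := 0) (by simpa [smul_eq_mul] using hx)
    exact this
  · intro i x hx
    have hlen : (i : ℕ) + 1 < (a :: List.ofFn g).length := by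
      simp [List.length_ofFn]
    have hreg' := hreg.regular_mod_prev ((i : ℕ) + 1) hlen
    -- identify the element
    have helem : (a :: List.ofFn g)[(i : ℕ) + 1] = g i := by
      simp [List.getElem_cons_succ, List.getElem_ofFn]
    -- identify the ideal
    have hideal : Ideal.ofList ((a :: List.ofFn g).take ((i : ℕ) + 1))
        = Ideal.span (insert a (g '' {j | j < i})) := by
      rw [List.take_succ_cons]
      have hset : {r | r ∈ a :: (List.ofFn g).take (i : ℕ)}
          = insert a (g '' {j | j < i}) := by
        ext x
        simp only [Set.mem_setOf_eq, List.mem_cons, Set.mem_insert_iff]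
        constructor
        · rintro (rfl | hx)
          · exact Or.inl rfl
          · rw [List.mem_take_iff_getElem] at hx
            obtain ⟨j, hj, rfl⟩ := hx
            rw [List.length_ofFn, Nat.lt_min] at hj
            refine Or.inr ⟨⟨j, hj.2⟩, hj.1, ?_⟩
            simp [List.getElem_ofFn]
        · rintro (rfl | ⟨j, hj, rfl⟩)
          · exact Or.inl rfl
          · refine Or.inr ?_
            rw [List.mem_take_iff_getElem]
            refine ⟨(j : ℕ), ?_, ?_⟩
            · rw [List.length_ofFn, Nat.lt_min]
              exact ⟨hj, j.isLt⟩
            · simp [List.getElem_ofFn]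
      rw [Ideal.ofList]
      rw [hset]
    rw [helem, hideal] at hreg'
    -- now use hreg'
    set J := Ideal.span (insert a (g '' {j | j < i})) with hJ
    have hx' : g i • (Submodule.Quotient.mk (p := (J • ⊤ : Submodule A A)) x) = g i • 0 := by
      rw [smul_zero, ← Submodule.Quotient.mk_smul, Submodule.Quotient.mk_eq_zero, htop]
      simpa [smul_eq_mul] using hx
    have := hreg' hx'
    rw [Submodule.Quotient.mk_eq_zero, htop] at this
    exact this

/-- Let `a, g_1, …, g_n` be a weakly regular (hence `H_1`-regular) sequence in `A` and let
`d_1, …, d_n` be positive integers. The `A`-algebra map `φ` from the polynomial ring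
`A[x_1, …, x_n]` to the localization `A_a` away from `a`, sending `x_i` to
`λ(g_i)·λ(a)^{-d_i}`, has kernel the ideal `(g_1 − a^{d_1}x_1, …, g_n − a^{d_n}x_n)` and
image the dilatation `A[(g_1)/a^{d_1}, …, (g_n)/a^{d_n}]`, i.e. the sub-`A`-algebra of
`A_a` generated by the fractions `λ(g_i)·λ(a)^{-d_i}`. Consequently the dilatation is
`A[x_1,…,x_n]/(g_1 − a^{d_1}x_1, …, g_n − a^{d_n}x_n)` as an `A`-algebra. -/
theorem dilatation_regular_sequence_presentation {A : Type*} [CommRing A] {n : ℕ}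
    (a : A) (g : Fin n → A)
    (hreg : RingTheory.Sequence.IsWeaklyRegular A (a :: List.ofFn g))
    (d : Fin n → ℕ) (hd : ∀ i, 0 < d i) :
    let φ : MvPolynomial (Fin n) A →ₐ[A] Localization.Away a :=
      MvPolynomial.aeval fun i =>
        algebraMap A (Localization.Away a) (g i) *
          (Ring.inverse (algebraMap A (Localization.Away a) a)) ^ (d i)
    RingHom.ker φ =
        Ideal.span (Set.range fun i : Fin n =>
          MvPolynomial.C (g i) - MvPolynomial.C a ^ (d i) * MvPolynomial.X i) ∧
      φ.range =
        Algebra.adjoin A (Set.range fun i : Fin n =>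
          algebraMap A (Localization.Away a) (g i) *
            (Ring.inverse (algebraMap A (Localization.Away a) a)) ^ (d i)) := by
  intro φ
  obtain ⟨ha, hg⟩ := aux_extract hreg
  have hunit : IsUnit (algebraMap A (Localization.Away a) a) :=
    IsLocalization.Away.algebraMap_isUnit a
  have hcancel : (algebraMap A (Localization.Away a) a)
      * Ring.inverse (algebraMap A (Localization.Away a) a) = 1 :=
    Ring.mul_inverse_cancel _ hunit
  set Ispan : Ideal (MvPolynomial (Fin n) A) :=
    Ideal.span (Set.range fun i : Fin n =>
      MvPolynomial.C (g i) - MvPolynomial.C a ^ (d i) * MvPolynomial.X i) with hIdef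
  have hspan_le : Ispan ≤ RingHom.ker φ := by
    rw [hIdef, Ideal.span_le]
    rintro _ ⟨i, rfl⟩
    simp only [SetLike.mem_coe, RingHom.mem_ker, RingHom.coe_coe, map_sub, map_mul, map_pow,
      MvPolynomial.aeval_C, MvPolynomial.aeval_X, φ]
    have h2 : (algebraMap A (Localization.Away a) a) ^ (d i)
        * (algebraMap A (Localization.Away a) (g i)
          * Ring.inverse (algebraMap A (Localization.Away a) a) ^ (d i))
        = algebraMap A (Localization.Away a) (g i)
          * ((algebraMap A (Localization.Away a) a
              * Ring.inverse (algebraMap A (Localization.Away a) a)) ^ (d i)) := by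
      ring
    rw [h2, hcancel, one_pow, mul_one, sub_self]
  constructor
  · apply le_antisymm _ hspan_le
    intro p hp
    rw [RingHom.mem_ker] at hp
    obtain ⟨K, c, hKc⟩ := aux_claimA a g d p
    rw [← hIdef] at hKc
    have hc0 : algebraMap A (Localization.Away a) c = 0 := by
      have hmem := hspan_le hKc
      rw [RingHom.mem_ker] at hmem
      have h3 : φ (MvPolynomial.C c) = algebraMap A (Localization.Away a) c :=
        MvPolynomial.aeval_C _ _
      rw [map_sub, map_mul, map_pow, hp, h3, mul_zero, zero_sub, neg_eq_zero] at hmem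
      exact hmem
    obtain ⟨m, hm⟩ := (IsLocalization.map_eq_zero_iff (Submonoid.powers a)
      (Localization.Away a) c).mp hc0
    obtain ⟨k, hk⟩ := m.2
    have hc : c = 0 := by
      apply aux_pow ha k
      rw [← hk] at hm
      simpa using hm
    rw [hc, map_zero, sub_zero] at hKc
    have hKmem : ∀ (K : ℕ) (q : MvPolynomial (Fin n) A),
        MvPolynomial.C a ^ K * q ∈ Ispan → q ∈ Ispan := by
      intro K
      induction K with
      | zero => intro q h; simpa using h
      | succ K IHK =>
          intro q h
          have h' : MvPolynomial.C a ^ K * (MvPolynomial.C a * q) ∈ Ispan := by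
            rw [show MvPolynomial.C a ^ K * (MvPolynomial.C a * q)
              = MvPolynomial.C a ^ (K + 1) * q from by ring]
            exact h
          exact aux_main ha n g d hd hg q (IHK _ h')
    exact hKmem K p hKc
  · exact (Algebra.adjoin_range_eq_range_aeval A _).symm
end

section
/- Let A be a commutative ring with a multi-center {[M_i, a_i]}_{i∈I}, let K ⊆ I, and suppose that for every i ∈ I \ K there exists k(i) ∈ K with a_{k(i)} ∈ M_i + (a_i) and M_i + (a_i) ⊆ M_{k(i)} + (a_{k(i)}). For i ∈ I \ K, the fraction t_i = λ_K(a_i)·λ_K(a_{k(i)})⁻¹ lies in the dilatation A' := A[{M_k/a_k}_{k∈K}] ⊆ S_K⁻¹A (since a_i ∈ M_{k(i)} + (a_{k(i)})). Then the canonical A-algebra homomorphism A' → A[{M_i/a_i}_{i∈I}] (induced by the localization map S_K⁻¹A → S_I⁻¹A) exhibits the full dilatation A[{M_i/a_i}_{i∈I}] as the localization of A' at the multiplicative submonoid of A' generated by the elements {t_i : i ∈ I \ K}. -/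
set_option maxHeartbeats 1000000
set_option synthInstance.maxHeartbeats 1000000

/-- The canonical `A`-algebra homomorphism `A[{M_i/a_i}_{i ∈ K}] → A[{M_i/a_i}_{i ∈ I}]`
induced by the localization map `S_K⁻¹A → S_I⁻¹A` (which carries the `K`-dilatation into
the `I`-dilatation). -/
noncomputable def dilatationOnMap {A : Type*} [CommRing A] {I : Type*}
    (M : I → Ideal A) (a : I → A) (K : Set I)
    (hmaps : ∀ x ∈ dilatationOn M a K,
      IsLocalization.map (Localization (Submonoid.closure (a '' (Set.univ : Set I))))
        (RingHom.id A) (closure_image_le_comap a (Set.subset_univ K)) x ∈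
          dilatationOn M a Set.univ) :
    dilatationOn M a K →+* dilatationOn M a Set.univ :=
  RingHom.codRestrict
    ((IsLocalization.map (Localization (Submonoid.closure (a '' (Set.univ : Set I))))
        (RingHom.id A) (closure_image_le_comap a (Set.subset_univ K))).comp
      (dilatationOn M a K).val.toRingHom)
    (dilatationOn M a Set.univ)
    (fun x => hmaps ↑x x.2)

/-!
For `i ∉ K` put `t_i = a_i / a_{k(i)}`. It lies in the `K`-dilatation because
`a_i ∈ M_{k(i)} + (a_{k(i)})`, and `a_i = t_i · a_{k(i)}` in `S_K⁻¹A` with `a_{k(i)}` a unit there.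
Hence every element of `S_I` is, in `S_K⁻¹A`, a product of `t_i`'s and a unit, so whatever dies in
`S_I⁻¹A` is already killed by a product of `t_i`'s. In the full dilatation `t_i` is a unit with
inverse the generator `a_{k(i)} / a_i`, and a generator `m / a_i` with `i ∉ K` equals
`(m / a_{k(i)}) · t_i⁻¹`, where `m / a_{k(i)}` lies in the `K`-dilatation as
`M_i ⊆ M_{k(i)} + (a_{k(i)})`.
-/

namespace Dilatation

variable {A : Type*} [CommRing A] {I : Type*}

/-- `λ_K(b) · λ_K(a_j)⁻¹`; as `Ring.inverse` sends non-units to `0`, this is only the fraction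
`b / a_j` when `λ_K(a_j)` is a unit, e.g. for `j ∈ K`. -/
noncomputable def frac (a : I → A) (K : Set I) (b : A) (j : I) :
    Localization (Submonoid.closure (a '' K)) :=
  algebraMap A _ b * Ring.inverse (algebraMap A (Localization (Submonoid.closure (a '' K))) (a j))

noncomputable abbrev mapOfSubset (a : I → A) {K L : Set I} (hKL : K ⊆ L) :
    Localization (Submonoid.closure (a '' K)) →+* Localization (Submonoid.closure (a '' L)) :=
  IsLocalization.map _ (RingHom.id A) (closure_image_le_comap a hKL)

lemma mem_of_sup_span_singleton_le {J J' : Ideal A} {x : A} (h : J + Ideal.span {x} ≤ J') :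
    x ∈ J' :=
  h (Ideal.mem_sup_right (Ideal.mem_span_singleton_self x))

section frac

variable (a : I → A) {K : Set I} {j : I}

lemma isUnit_algebraMap_of_mem (hj : j ∈ K) :
    IsUnit (algebraMap A (Localization (Submonoid.closure (a '' K))) (a j)) :=
  IsLocalization.map_units _
    (⟨a j, Submonoid.subset_closure ⟨j, hj, rfl⟩⟩ : Submonoid.closure (a '' K))

lemma frac_mul_algebraMap (hj : j ∈ K) (b : A) :
    frac a K b j * algebraMap A _ (a j) = algebraMap A _ b :=
  Ring.inverse_mul_cancel_right _ _ (isUnit_algebraMap_of_mem a hj)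

lemma eq_frac_iff (hj : j ∈ K) (b : A) (x : Localization (Submonoid.closure (a '' K))) :
    x = frac a K b j ↔ x * algebraMap A _ (a j) = algebraMap A _ b :=
  Ring.eq_mul_inverse_iff_mul_eq _ _ _ (isUnit_algebraMap_of_mem a hj)

lemma frac_self (hj : j ∈ K) : frac a K (a j) j = 1 :=
  Ring.mul_inverse_cancel _ (isUnit_algebraMap_of_mem a hj)

lemma frac_mul_frac (hj : j ∈ K) (b : A) (l : I) :
    frac a K b j * frac a K (a j) l = frac a K b l := by
  rw [frac, frac, frac, mul_assoc, Ring.inverse_mul_cancel_left _ _ (isUnit_algebraMap_of_mem a hj)]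

lemma mapOfSubset_algebraMap {L : Set I} (hKL : K ⊆ L) (b : A) :
    mapOfSubset a hKL (algebraMap A _ b) = algebraMap A _ b :=
  IsLocalization.map_eq _ b

lemma mapOfSubset_frac {L : Set I} (hKL : K ⊆ L) (hj : j ∈ K) (b : A) :
    mapOfSubset a hKL (frac a K b j) = frac a L b j := by
  rw [eq_frac_iff a (hKL hj), ← mapOfSubset_algebraMap a hKL, ← map_mul,
    frac_mul_algebraMap a hj, mapOfSubset_algebraMap]

lemma frac_mem_dilatationOn (M : I → Ideal A) (hj : j ∈ K) {b : A}
    (hb : b ∈ M j + Ideal.span {a j}) : frac a K b j ∈ dilatationOn M a K := by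
  obtain ⟨m, hm, _, hc, rfl⟩ := Submodule.mem_sup.mp hb
  obtain ⟨c, rfl⟩ := Ideal.mem_span_singleton'.mp hc
  rw [frac, map_add, add_mul, map_mul, mul_assoc,
    Ring.mul_inverse_cancel _ (isUnit_algebraMap_of_mem a hj), mul_one]
  exact add_mem (Algebra.subset_adjoin ⟨j, hj, m, hm, rfl⟩)
    ((dilatationOn M a K).algebraMap_mem c)

end frac

section ratio

variable (M : I → Ideal A) (a : I → A) (K : Set I) (kmap : I → I)

noncomputable def ratioSubmonoid : Submonoid (dilatationOn M a K) :=
  Submonoid.closure {t | ∃ i ∉ K, (t : Localization _) = frac a K (a i) (kmap i)}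

variable {M a K kmap}

lemma coe_dilatationOnMap
    (hmaps : ∀ x ∈ dilatationOn M a K,
      mapOfSubset a (Set.subset_univ K) x ∈ dilatationOn M a Set.univ) (x : dilatationOn M a K) :
    (dilatationOnMap M a K hmaps x : Localization (Submonoid.closure (a '' Set.univ))) =
      mapOfSubset a (Set.subset_univ K) x :=
  rfl

lemma ratio_mem_ratioSubmonoid (hkK : ∀ i ∉ K, kmap i ∈ K)
    (hmem : ∀ i ∉ K, a i ∈ M (kmap i) + Ideal.span {a (kmap i)}) {i : I} (hi : i ∉ K) :
    ⟨frac a K (a i) (kmap i), frac_mem_dilatationOn a M (hkK i hi) (hmem i hi)⟩ ∈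
      ratioSubmonoid M a K kmap :=
  Submonoid.subset_closure ⟨i, hi, rfl⟩

lemma exists_algebraMap_eq_ratio_mul_unit (hkK : ∀ i ∉ K, kmap i ∈ K)
    (hmem : ∀ i ∉ K, a i ∈ M (kmap i) + Ideal.span {a (kmap i)}) {c : A}
    (hc : c ∈ Submonoid.closure (a '' Set.univ)) :
    ∃ t ∈ ratioSubmonoid M a K kmap, ∃ u, IsUnit u ∧
      algebraMap A (Localization (Submonoid.closure (a '' K))) c = t * u := by
  induction hc using Submonoid.closure_induction with
  | mem _ hc =>
    obtain ⟨i, -, rfl⟩ := hc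
    by_cases hi : i ∈ K
    · exact ⟨1, one_mem _, _, isUnit_algebraMap_of_mem a hi, (one_mul _).symm⟩
    · exact ⟨_, ratio_mem_ratioSubmonoid hkK hmem hi, _, isUnit_algebraMap_of_mem a (hkK i hi),
        (frac_mul_algebraMap a (hkK i hi) (a i)).symm⟩
  | one => exact ⟨1, one_mem _, 1, isUnit_one, by simp⟩
  | mul _ _ _ _ hx hy =>
    obtain ⟨t, ht, u, hu, hx⟩ := hx
    obtain ⟨t', ht', u', hu', hy⟩ := hy
    refine ⟨t * t', mul_mem ht ht', u * u', hu.mul hu', ?_⟩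
    rw [map_mul, hx, hy, MulMemClass.coe_mul]
    ring

lemma exists_ratio_mul_eq_zero (hkK : ∀ i ∉ K, kmap i ∈ K)
    (hmem : ∀ i ∉ K, a i ∈ M (kmap i) + Ideal.span {a (kmap i)})
    {x : Localization (Submonoid.closure (a '' K))}
    (hx : mapOfSubset a (Set.subset_univ K) x = 0) :
    ∃ t ∈ ratioSubmonoid M a K kmap, (t : Localization _) * x = 0 := by
  obtain ⟨⟨r, s⟩, hrs⟩ := IsLocalization.surj (Submonoid.closure (a '' K)) x
  have hr : algebraMap A (Localization (Submonoid.closure (a '' Set.univ))) r = 0 := by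
    rw [← mapOfSubset_algebraMap a (Set.subset_univ K), ← hrs, map_mul, hx, zero_mul]
  obtain ⟨c, hc⟩ :=
    (IsLocalization.map_eq_zero_iff (Submonoid.closure (a '' Set.univ)) _ r).mp hr
  obtain ⟨t, ht, u, hu, hcu⟩ := exists_algebraMap_eq_ratio_mul_unit hkK hmem c.2
  refine ⟨t, ht, (hu.mul (IsLocalization.map_units _ s)).mul_left_cancel ?_⟩
  calc u * algebraMap A _ s * (t * x) = algebraMap A _ c * (x * algebraMap A _ s) := by
        rw [hcu]; ring
    _ = u * algebraMap A _ s * 0 := by rw [hrs, ← map_mul, hc, map_zero, mul_zero]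

lemma isUnit_dilatationOnMap (hkK : ∀ i ∉ K, kmap i ∈ K)
    (hak : ∀ i ∉ K, a (kmap i) ∈ M i + Ideal.span {a i})
    (hmaps : ∀ x ∈ dilatationOn M a K,
      mapOfSubset a (Set.subset_univ K) x ∈ dilatationOn M a Set.univ)
    {t : dilatationOn M a K} (ht : t ∈ ratioSubmonoid M a K kmap) :
    IsUnit (dilatationOnMap M a K hmaps t) := by
  refine (Submonoid.closure_le (S := (IsUnit.submonoid _).comap
    (dilatationOnMap M a K hmaps))).mpr ?_ ht
  rintro t ⟨i, hi, hti⟩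
  refine IsUnit.of_mul_eq_one ⟨_, frac_mem_dilatationOn a M (Set.mem_univ i) (hak i hi)⟩
    (Subtype.ext ?_)
  rw [MulMemClass.coe_mul, OneMemClass.coe_one, coe_dilatationOnMap, hti,
    mapOfSubset_frac a _ (hkK i hi), frac_mul_frac a (Set.mem_univ _), frac_self a (Set.mem_univ i)]

lemma exists_mul_ratio_eq_map (hkK : ∀ i ∉ K, kmap i ∈ K)
    (hle : ∀ i ∉ K, M i + Ideal.span {a i} ≤ M (kmap i) + Ideal.span {a (kmap i)})
    {z : Localization (Submonoid.closure (a '' Set.univ))} (hz : z ∈ dilatationOn M a Set.univ) :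
    ∃ t ∈ ratioSubmonoid M a K kmap, ∃ w ∈ dilatationOn M a K,
      z * mapOfSubset a (Set.subset_univ K) t = mapOfSubset a (Set.subset_univ K) w := by
  have hmem i (hi : i ∉ K) := mem_of_sup_span_singleton_le (hle i hi)
  induction hz using Algebra.adjoin_induction with
  | mem _ hz =>
    obtain ⟨i, -, m, hm, rfl⟩ := hz
    by_cases hi : i ∈ K
    · refine ⟨1, one_mem _, _, Algebra.subset_adjoin ⟨i, hi, m, hm, rfl⟩, ?_⟩
      rw [OneMemClass.coe_one, map_one, mul_one]
      exact (mapOfSubset_frac a _ hi m).symm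
    · refine ⟨_, ratio_mem_ratioSubmonoid hkK hmem hi, _,
        frac_mem_dilatationOn a M (hkK i hi) (hle i hi (Ideal.mem_sup_left hm)), ?_⟩
      rw [mapOfSubset_frac a _ (hkK i hi), mapOfSubset_frac a _ (hkK i hi)]
      exact frac_mul_frac a (Set.mem_univ i) m (kmap i)
  | algebraMap r =>
    refine ⟨1, one_mem _, _, (dilatationOn M a K).algebraMap_mem r, ?_⟩
    rw [OneMemClass.coe_one, map_one, mul_one, mapOfSubset_algebraMap]
  | add x y _ _ hx hy =>
    obtain ⟨t, ht, w, hw, hx⟩ := hx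
    obtain ⟨t', ht', w', hw', hy⟩ := hy
    refine ⟨t * t', mul_mem ht ht', w * t' + w' * t,
      add_mem (mul_mem hw t'.2) (mul_mem hw' t.2), ?_⟩
    simp only [MulMemClass.coe_mul, map_mul, map_add]
    linear_combination mapOfSubset a _ t'.val * hx + mapOfSubset a _ t.val * hy
  | mul x y _ _ hx hy =>
    obtain ⟨t, ht, w, hw, hx⟩ := hx
    obtain ⟨t', ht', w', hw', hy⟩ := hy
    refine ⟨t * t', mul_mem ht ht', w * w', mul_mem hw hw', ?_⟩
    simp only [MulMemClass.coe_mul, map_mul]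
    linear_combination y * mapOfSubset a _ t'.val * hx + mapOfSubset a _ w * hy

lemma exists_ratio_mul_eq_of_dilatationOnMap_eq (hkK : ∀ i ∉ K, kmap i ∈ K)
    (hmem : ∀ i ∉ K, a i ∈ M (kmap i) + Ideal.span {a (kmap i)})
    (hmaps : ∀ x ∈ dilatationOn M a K,
      mapOfSubset a (Set.subset_univ K) x ∈ dilatationOn M a Set.univ)
    {x y : dilatationOn M a K}
    (hxy : dilatationOnMap M a K hmaps x = dilatationOnMap M a K hmaps y) :
    ∃ t ∈ ratioSubmonoid M a K kmap, t * x = t * y := by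
  have h0 : mapOfSubset a (Set.subset_univ K) (x - y : dilatationOn M a K) = 0 := by
    rw [← coe_dilatationOnMap hmaps, map_sub, hxy, sub_self, ZeroMemClass.coe_zero]
  obtain ⟨t, ht, htxy⟩ := exists_ratio_mul_eq_zero hkK hmem h0
  refine ⟨t, ht, ?_⟩
  rw [← sub_eq_zero, ← mul_sub]
  exact Subtype.ext htxy

end ratio

end Dilatation

/-- If for every `i ∉ K` there is `k(i) ∈ K` with `a_{k(i)} ∈ M_i + (a_i)` and
`M_i + (a_i) ⊆ M_{k(i)} + (a_{k(i)})`, then the canonical map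
`A[{M_k/a_k}_{k ∈ K}] → A[{M_i/a_i}_{i ∈ I}]` exhibits the full dilatation as the
localization of `A[{M_k/a_k}_{k ∈ K}]` at the submonoid generated by the fractions
`t_i = λ_K(a_i)·λ_K(a_{k(i)})⁻¹`, `i ∉ K`. -/
theorem dilatationOn_isLocalization {A : Type*} [CommRing A] {I : Type*}
    (M : I → Ideal A) (a : I → A) (K : Set I) (kmap : I → I)
    (hk : ∀ i ∉ K, kmap i ∈ K ∧ a (kmap i) ∈ M i + Ideal.span {a i} ∧
      M i + Ideal.span {a i} ≤ M (kmap i) + Ideal.span {a (kmap i)})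
    (hmaps : ∀ x ∈ dilatationOn M a K,
      IsLocalization.map (Localization (Submonoid.closure (a '' (Set.univ : Set I))))
        (RingHom.id A) (closure_image_le_comap a (Set.subset_univ K)) x ∈
          dilatationOn M a Set.univ) :
    @IsLocalization (dilatationOn M a K) _
      (Submonoid.closure {t : dilatationOn M a K | ∃ i ∉ K,
        (t : Localization (Submonoid.closure (a '' K))) =
          algebraMap A (Localization (Submonoid.closure (a '' K))) (a i) *
            Ring.inverse (algebraMap A (Localization (Submonoid.closure (a '' K)))
              (a (kmap i)))})
      (dilatationOn M a Set.univ) _ (dilatationOnMap M a K hmaps).toAlgebra := by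
  have hkK i (hi : i ∉ K) := (hk i hi).1
  have hak i (hi : i ∉ K) := (hk i hi).2.1
  have hle i (hi : i ∉ K) := (hk i hi).2.2
  have hmem i (hi : i ∉ K) := Dilatation.mem_of_sup_span_singleton_le (hle i hi)
  let := (dilatationOnMap M a K hmaps).toAlgebra
  refine ⟨{
      map_units := fun t => Dilatation.isUnit_dilatationOnMap hkK hak hmaps t.2
      surj := fun z => ?_
      exists_of_eq := fun hxy => ?_ }⟩
  · obtain ⟨t, ht, w, hw, h⟩ := Dilatation.exists_mul_ratio_eq_map hkK hle z.2
    exact ⟨(⟨w, hw⟩, ⟨t, ht⟩), Subtype.ext h⟩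
  · obtain ⟨t, ht, h⟩ :=
      Dilatation.exists_ratio_mul_eq_of_dilatationOnMap_eq hkK hmem hmaps hxy
    exact ⟨⟨t, ht⟩, h⟩
end
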